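/- arXiv:2511.06617 — 7 statements merged into one kernel-verified Lean document; each statement's English description precedes it below -/
import Mathlib

section
/- Let w ∈ {0,1}* and consider folds of the word 1w1 in the 2D rectangular lattice ℤ², i.e., injective maps F : Fin (|w|+2) → ℤ² with consecutive images at L¹ distance 1, labeling position i with the i-th letter of 1w1. The score of a fold is the number of unordered pairs {i,j} with |i−j| ≥ 2 such that both positions are labeled 0 and F(i), F(j) are adjacent in ℤ². Then the maximum score over all folds is at most Z(w), the number of zeros in w. -/
/-- L¹ distance on ℤ². -/
def d2 (p q : ℤ × ℤ) : ℕ := (p.1 - q.1).natAbs + (p.2 - q.2).natAbs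

/-- Adjacency in the 2D rectangular lattice. -/
def adj2 (p q : ℤ × ℤ) : Prop := d2 p q = 1

/-- Adjacency in the hexagonal (3-regular, brick-wall) lattice. -/
def hexAdj (p q : ℤ × ℤ) : Prop :=
  (p.2 = q.2 ∧ (p.1 - q.1).natAbs = 1) ∨
  (p.1 = q.1 ∧ ((q.2 = p.2 + 1 ∧ (p.1 + p.2) % 2 = 0) ∨ (p.2 = q.2 + 1 ∧ (q.1 + q.2) % 2 = 0)))

/-- A fold (self-avoiding walk) of a binary word `w` on a lattice with adjacency `A`:
letters `false` = hydrophobic (0), `true` = polar (1). -/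
def IsFold (A : ℤ × ℤ → ℤ × ℤ → Prop) (w : List Bool) (F : Fin w.length → ℤ × ℤ) : Prop :=
  Function.Injective F ∧
    ∀ (i : ℕ) (h : i + 1 < w.length), A (F ⟨i, by omega⟩) (F ⟨i + 1, h⟩)

/-- The score of a fold: the number of (unordered) pairs of non-consecutive positions,
both labeled 0, whose images are adjacent. -/
noncomputable def score (A : ℤ × ℤ → ℤ × ℤ → Prop) (w : List Bool) (F : Fin w.length → ℤ × ℤ) : ℕ :=
  Set.ncard {p : Fin w.length × Fin w.length |
    p.1.1 + 2 ≤ p.2.1 ∧ w.get p.1 = false ∧ w.get p.2 = false ∧ A (F p.1) (F p.2)}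

/-- The optimal score over all folds of `w`. -/
noncomputable def J (A : ℤ × ℤ → ℤ × ℤ → Prop) (w : List Bool) : ℕ :=
  sSup {s | ∃ F, IsFold A w F ∧ score A w F = s}


lemma adj2_mem {p q : ℤ × ℤ} (h : adj2 p q) :
    q ∈ ({(p.1+1,p.2), (p.1-1,p.2), (p.1,p.2+1), (p.1,p.2-1)} : Finset (ℤ × ℤ)) := by
  simp only [Finset.mem_insert, Finset.mem_singleton, Prod.ext_iff]
  unfold adj2 d2 at h
  omega

lemma adj2_symm {p q : ℤ × ℤ} (h : adj2 p q) : adj2 q p := by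
  unfold adj2 d2 at *; omega

lemma card_get_eq_count (l : List Bool) (a : Bool) :
    (Finset.univ.filter fun i : Fin l.length => l.get i = a).card = l.count a := by
  induction l with
  | nil => simp
  | cons b t ih =>
      have h0 : (Finset.filter (fun i : Fin (b::t).length => (b :: t).get i = a) Finset.univ).card
          = (Finset.filter (fun i : Fin (t.length+1) => (b :: t).get i = a) Finset.univ).card := rfl
      rw [h0, Fin.card_filter_univ_succ' (fun i : Fin (t.length+1) => (b :: t).get i = a)]
      simp only [List.get_cons_zero, List.get_cons_succ, List.count_cons]
      simp only [List.get_eq_getElem] at ih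
      by_cases hb : b = a <;> simp [hb, ih, add_comm]

lemma key_bound (L : List Bool) (F : Fin L.length → ℤ × ℤ)
    (hinj : Function.Injective F)
    (hstep : ∀ (i : ℕ) (h : i + 1 < L.length), adj2 (F ⟨i, by omega⟩) (F ⟨i + 1, h⟩))
    (hends : ∀ k : Fin L.length, L.get k = false → 0 < k.1 ∧ k.1 + 1 < L.length) :
    score adj2 L F ≤ L.count false := by
  classical
  set S : Finset (Fin L.length × Fin L.length) :=
    Finset.univ.filter (fun p => p.1.1 + 2 ≤ p.2.1 ∧ L.get p.1 = false ∧ L.get p.2 = false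
      ∧ adj2 (F p.1) (F p.2)) with hS
  have hscore : score adj2 L F = S.card := by
    rw [score, ← Set.ncard_coe_finset]
    congr 1
    ext p
    simp [hS]
  rw [hscore]
  set deg : Fin L.length → ℕ := fun k => (S.filter fun p => p.1 = k ∨ p.2 = k).card with hdeg
  -- double counting
  have h1 : ∀ k, deg k = (S.filter fun p => p.1 = k).card + (S.filter fun p => p.2 = k).card := by
    intro k
    rw [hdeg]
    simp only [Finset.filter_or]
    apply Finset.card_union_of_disjoint
    rw [Finset.disjoint_left]
    intro p hp1 hp2
    simp only [hS, Finset.mem_filter, Finset.mem_univ, true_and] at hp1 hp2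
    have h : p.1.1 + 2 ≤ p.2.1 := hp1.1.1
    rw [hp1.2, hp2.2] at h
    omega
  have h2 : S.card = ∑ k : Fin L.length, (S.filter fun p => p.1 = k).card :=
    Finset.card_eq_sum_card_fiberwise (fun x _ => Finset.mem_univ _)
  have h3 : S.card = ∑ k : Fin L.length, (S.filter fun p => p.2 = k).card :=
    Finset.card_eq_sum_card_fiberwise (fun x _ => Finset.mem_univ _)
  have hsum : ∑ k : Fin L.length, deg k = 2 * S.card := by
    simp only [h1, Finset.sum_add_distrib, ← h2, ← h3]
    ring
  set Zs : Finset (Fin L.length) := Finset.univ.filter (fun k => L.get k = false) with hZs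
  have hdeg0 : ∀ k ∈ Finset.univ, k ∉ Zs → deg k = 0 := by
    intro k _ hk
    simp only [hZs, Finset.mem_filter, Finset.mem_univ, true_and] at hk
    rw [hdeg, Finset.card_eq_zero, Finset.filter_eq_empty_iff]
    intro p hp
    simp only [hS, Finset.mem_filter, Finset.mem_univ, true_and] at hp
    rintro (e | e)
    · exact hk (e ▸ hp.2.1)
    · exact hk (e ▸ hp.2.2.1)
  have hrestrict : ∑ k : Fin L.length, deg k = ∑ k ∈ Zs, deg k :=
    (Finset.sum_subset (Finset.subset_univ Zs) hdeg0).symm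
  -- the degree bound
  have hdeg2 : ∀ k ∈ Zs, deg k ≤ 2 := by
    intro k hk
    simp only [hZs, Finset.mem_filter, Finset.mem_univ, true_and] at hk
    obtain ⟨hk0, hk1⟩ := hends k hk
    set km : Fin L.length := ⟨k.1 - 1, by omega⟩ with hkm
    set kp : Fin L.length := ⟨k.1 + 1, hk1⟩ with hkp
    have hadjm : adj2 (F km) (F k) := by
      have h := hstep (k.1 - 1) (by omega)
      have e : (⟨k.1 - 1 + 1, by omega⟩ : Fin L.length) = k := Fin.ext (show k.1 - 1 + 1 = k.1 by omega)
      rw [e] at h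
      exact h
    have hadjp : adj2 (F k) (F kp) := by
      have h := hstep k.1 hk1
      have e : (⟨k.1, by omega⟩ : Fin L.length) = k := Fin.ext rfl
      rw [e] at h
      exact h
    set quad : Finset (ℤ × ℤ) :=
      {((F k).1+1,(F k).2), ((F k).1-1,(F k).2), ((F k).1,(F k).2+1), ((F k).1,(F k).2-1)} with hq
    set N : Finset (ℤ × ℤ) := quad \ {F km, F kp} with hN
    have hsub : ({F km, F kp} : Finset (ℤ × ℤ)) ⊆ quad := by
      intro x hx
      simp only [Finset.mem_insert, Finset.mem_singleton] at hx
      rcases hx with rfl | rfl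
      · exact adj2_mem (adj2_symm hadjm)
      · exact adj2_mem hadjp
    have hmk : km ≠ kp := by
      intro h
      have h2 : km.1 = kp.1 := congrArg Fin.val h
      simp only [hkm, hkp] at h2
      omega
    have hpair : ({F km, F kp} : Finset (ℤ × ℤ)).card = 2 :=
      Finset.card_pair (fun h => hmk (hinj h))
    have hquad4 : quad.card ≤ 4 := by
      rw [hq]
      apply (Finset.card_insert_le _ _).trans
      apply Nat.succ_le_succ
      apply (Finset.card_insert_le _ _).trans
      apply Nat.succ_le_succ
      apply (Finset.card_insert_le _ _).trans
      simp
    have hNcard : N.card ≤ 2 := by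
      rw [hN, Finset.card_sdiff_of_subset hsub, hpair]
      omega
    rw [hdeg]
    refine le_trans (Finset.card_le_card_of_injOn
      (fun p => F (if p.1 = k then p.2 else p.1)) ?_ ?_) hNcard
    · -- maps to N
      intro p hp
      simp only [Finset.mem_coe, Finset.mem_filter, hS, Finset.mem_univ, true_and] at hp
      obtain ⟨⟨hord, _, _, hadj⟩, hdisj⟩ := hp
      rcases hdisj with e | e
      · show F (if p.1 = k then p.2 else p.1) ∈ N
        rw [if_pos e]
        rw [hN, Finset.mem_sdiff]
        constructor
        · exact adj2_mem (e ▸ hadj)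
        · simp only [Finset.mem_insert, Finset.mem_singleton]
          push_neg
          constructor
          · intro h
            have := hinj h
            have : p.2.1 = km.1 := by rw [this]
            simp [hkm] at this
            omega
          · intro h
            have := hinj h
            have : p.2.1 = kp.1 := by rw [this]
            simp [hkp] at this
            have he : p.1.1 = k.1 := by rw [e]
            omega
      · have hne : p.1 ≠ k := by
          intro h
          rw [h, e] at hord
          omega
        show F (if p.1 = k then p.2 else p.1) ∈ N
        rw [if_neg hne]
        rw [hN, Finset.mem_sdiff]
        constructor
        · exact adj2_mem (adj2_symm (e ▸ hadj))
        · simp only [Finset.mem_insert, Finset.mem_singleton]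
          push_neg
          have he : p.2.1 = k.1 := by rw [e]
          constructor
          · intro h
            have := hinj h
            have : p.1.1 = km.1 := by rw [this]
            simp [hkm] at this
            omega
          · intro h
            have := hinj h
            have : p.1.1 = kp.1 := by rw [this]
            simp [hkp] at this
            omega
    · -- injective
      intro p hp q hq hpq
      simp only [Finset.mem_coe, Finset.mem_filter, hS, Finset.mem_univ, true_and] at hp hq
      obtain ⟨⟨hordp, _, _, _⟩, hdp⟩ := hp
      obtain ⟨⟨hordq, _, _, _⟩, hdq⟩ := hq
      have hvq := hinj hpq
      by_cases e1 : p.1 = k <;> by_cases e2 : q.1 = k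
      · rw [if_pos e1, if_pos e2] at hvq
        rw [Prod.ext_iff]
        exact ⟨e1.trans e2.symm, hvq⟩
      · rw [if_pos e1, if_neg e2] at hvq
        have hq2 : q.2 = k := hdq.resolve_left e2
        have h1 : k.1 + 2 ≤ p.2.1 := by rw [← e1]; exact hordp
        have h2 : q.1.1 + 2 ≤ k.1 := by rw [← hq2]; exact hordq
        have : p.2.1 = q.1.1 := by rw [hvq]
        omega
      · rw [if_neg e1, if_pos e2] at hvq
        have hp2 : p.2 = k := hdp.resolve_left e1
        have h1 : k.1 + 2 ≤ q.2.1 := by rw [← e2]; exact hordq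
        have h2 : p.1.1 + 2 ≤ k.1 := by rw [← hp2]; exact hordp
        have : p.1.1 = q.2.1 := by rw [hvq]
        omega
      · rw [if_neg e1, if_neg e2] at hvq
        have hp2 : p.2 = k := hdp.resolve_left e1
        have hq2 : q.2 = k := hdq.resolve_left e2
        rw [Prod.ext_iff]
        exact ⟨hvq, hp2.trans hq2.symm⟩
  -- put it together
  have hZcard : Zs.card = L.count false := by
    rw [hZs, card_get_eq_count]
  have hfinal : ∑ k ∈ Zs, deg k ≤ 2 * Zs.card := by
    calc ∑ k ∈ Zs, deg k ≤ ∑ _k ∈ Zs, 2 := Finset.sum_le_sum hdeg2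
    _ = 2 * Zs.card := by rw [Finset.sum_const]; ring
  omega

/-- Agarwala et al.: every fold of `1w1` in the 2D rectangular lattice scores at most
`Z(w)`, the number of zeros of `w`. -/
theorem stmt3 (w : List Bool) (F : Fin ([true] ++ w ++ [true]).length → ℤ × ℤ)
    (hF : IsFold adj2 ([true] ++ w ++ [true]) F) :
    score adj2 ([true] ++ w ++ [true]) F ≤ w.count false := by
  obtain ⟨hinj, hstep⟩ := hF
  have hlen : ([true] ++ w ++ [true]).length = w.length + 2 := by simp
  have hcount : ([true] ++ w ++ [true]).count false = w.count false := by simp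
  have hends : ∀ k : Fin ([true] ++ w ++ [true]).length,
      ([true] ++ w ++ [true]).get k = false → 0 < k.1 ∧ k.1 + 1 < ([true] ++ w ++ [true]).length := by
    intro k hk
    constructor
    · by_contra h
      have e : k = ⟨0, by simp⟩ := Fin.ext (show k.1 = 0 by omega)
      rw [e] at hk
      simp at hk
    · by_contra h
      have hke : k.1 = w.length + 1 := by have := k.2; omega
      have hg : ([true] ++ w ++ [true]).get k = true := by
        rw [List.get_eq_getElem]
        have h1 : ([true] ++ w).length ≤ k.1 := by simp; omega
        rw [List.getElem_append_right h1]
        simp [hke]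
      rw [hg] at hk; exact Bool.true_eq_false.mp hk
  calc score adj2 ([true] ++ w ++ [true]) F ≤ ([true] ++ w ++ [true]).count false :=
        key_bound _ F hinj hstep hends
    _ = w.count false := hcount
end

section
/- For every binary word w, the maximum score J(w) of any fold of w in the 2D rectangular lattice satisfies J(w) ≤ Z(w) + 1, where Z(w) is the number of zeros in w. -/
/-!
Count every contact twice, once from each end. A zero at position `i` sits on a lattice site
with at most four neighbours, and the sites of its chain neighbours `i - 1` and `i + 1` are
among them, so it takes part in at most two contacts, or three if `i` is an end of the chain.
Hence `2 J(w) ≤ 2 Z(w) + 2`. Only the degree of the lattice enters: on a lattice of degree at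
most `Δ` the same count gives `2 J(w) ≤ (Δ - 2) Z(w) + 2`.
-/

open Finset

instance : Std.Symm adj2 where
  symm _ _ h := by unfold adj2 d2 at *; omega

theorem encard_setOf_adj2_le (p : ℤ × ℤ) : {q | adj2 p q}.encard ≤ 4 := by
  have hsub : {q | adj2 p q} ⊆
      ({(p.1 + 1, p.2), (p.1 - 1, p.2), (p.1, p.2 + 1), (p.1, p.2 - 1)} : Finset (ℤ × ℤ)) := by
    rintro ⟨a, b⟩ h
    simp only [Set.mem_ofPred_eq, adj2, d2] at h
    simp only [coe_insert, coe_singleton, Set.mem_insert_iff, Set.mem_singleton_iff, Prod.mk.injEq]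
    omega
  refine (Set.encard_le_encard hsub).trans ?_
  rw [Set.encard_coe_eq_coe_finsetCard]
  exact_mod_cast card_le_four

theorem Fin.card_filter_val_add_one_eq_add_ite {n : ℕ} (i : Fin n) :
    #{j : Fin n | j.1 + 1 = i.1} + (if i.1 = 0 then 1 else 0) = 1 := by
  split_ifs with hi
  · rw [card_eq_zero.2 (filter_eq_empty_iff.2 fun j _ => by omega)]
  · rw [card_eq_one.2 ⟨⟨i.1 - 1, by omega⟩, by ext j; simp [Fin.ext_iff]; omega⟩]

theorem Fin.card_filter_val_eq_add_one_add_ite {n : ℕ} (i : Fin n) :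
    #{j : Fin n | j.1 = i.1 + 1} + (if i.1 + 1 = n then 1 else 0) = 1 := by
  split_ifs with hi
  · rw [card_eq_zero.2 (filter_eq_empty_iff.2 fun j _ => by have := j.isLt; omega)]
  · rw [card_eq_one.2 ⟨⟨i.1 + 1, by omega⟩, by ext j; simp [Fin.ext_iff]⟩]

theorem List.card_filter_get_eq_count {α : Type*} [DecidableEq α] (w : List α) (a : α) :
    #{i | w.get i = a} = w.count a :=
  Fin.card_filter_univ_eq_vector_get_eq_count a ⟨w, rfl⟩

theorem Function.Injective.card_filter_mem_le_encard {ι α : Type*} [Fintype ι] {f : ι → α}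
    (hf : Function.Injective f) (s : Set α) [DecidablePred (f · ∈ s)] :
    (#{i | f i ∈ s} : ℕ∞) ≤ s.encard := by
  rw [← Set.encard_coe_eq_coe_finsetCard, coe_filter, ← hf.encard_image]
  exact Set.encard_le_encard (Set.image_subset_iff.2 fun _ hx => hx.2)

theorem IsFold.adj_of_val_add_one_eq {A : ℤ × ℤ → ℤ × ℤ → Prop} {w : List Bool}
    {F : Fin w.length → ℤ × ℤ} (hF : IsFold A w F) {i j : Fin w.length} (h : i.1 + 1 = j.1) :
    A (F i) (F j) := by
  obtain ⟨i, hi⟩ := i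
  obtain ⟨j, hj⟩ := j
  subst h
  exact hF.2 i hj

def IsContact (A : ℤ × ℤ → ℤ × ℤ → Prop) (w : List Bool) (F : Fin w.length → ℤ × ℤ)
    (i j : Fin w.length) : Prop :=
  i.1 + 2 ≤ j.1 ∧ w.get i = false ∧ w.get j = false ∧ A (F i) (F j)

section Contacts

variable {A : ℤ × ℤ → ℤ × ℤ → Prop} {w : List Bool} {F : Fin w.length → ℤ × ℤ} {Δ : ℕ}

open Classical in
theorem score_eq_card_filter_isContact :
    score A w F = #{p : Fin w.length × Fin w.length | IsContact A w F p.1 p.2} := by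
  rw [← Set.ncard_coe_finset, coe_filter]
  simp [score, IsContact]

open Classical in
theorem two_mul_score_eq_sum_card_contacts :
    2 * score A w F = ∑ i, #{j | IsContact A w F i j ∨ IsContact A w F j i} := by
  have hdisj (i : Fin w.length) :
      Disjoint (α := Finset _) {j | IsContact A w F i j} {j | IsContact A w F j i} :=
    disjoint_filter.2 fun j _ h h' => by unfold IsContact at h h'; omega
  simp only [filter_or, card_union_of_disjoint (hdisj _), sum_add_distrib, card_filter]
  rw [score_eq_card_filter_isContact, card_filter, two_mul]
  nth_rw 1 [Fintype.sum_prod_type]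
  rw [Fintype.sum_prod_type_right]

open Classical in
theorem card_contacts_add_two_le [Std.Symm A] (hΔ : ∀ p, {q | A p q}.encard ≤ Δ)
    (hF : IsFold A w F) (i : Fin w.length) :
    #{j | IsContact A w F i j ∨ IsContact A w F j i} + 2 ≤
      Δ + (if i.1 = 0 then 1 else 0) + (if i.1 + 1 = w.length then 1 else 0) := by
  have hP := Fin.card_filter_val_add_one_eq_add_ite i
  have hS := Fin.card_filter_val_eq_add_one_add_ite i
  set C : Finset (Fin w.length) := {j | IsContact A w F i j ∨ IsContact A w F j i}
  set P : Finset (Fin w.length) := {j | j.1 + 1 = i.1}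
  set S : Finset (Fin w.length) := {j | j.1 = i.1 + 1}
  have hsub : C ∪ (P ∪ S) ⊆ ({j | A (F i) (F j)} : Finset _) := by
    intro j hj
    simp only [C, P, S, mem_union, mem_filter, mem_univ, true_and] at hj ⊢
    unfold IsContact at hj
    rcases hj with (h | h) | h | h
    · exact h.2.2.2
    · exact symm_of A h.2.2.2
    · exact symm_of A (hF.adj_of_val_add_one_eq h)
    · exact hF.adj_of_val_add_one_eq h.symm
  have hPS : Disjoint P S := disjoint_filter.2 fun j _ h h' => by omega
  have hCPS : Disjoint C (P ∪ S) := by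
    rw [← filter_or]
    exact disjoint_filter.2 fun j _ h h' => by unfold IsContact at h; omega
  have hN : #{j | A (F i) (F j)} ≤ Δ := by
    exact_mod_cast (hF.1.card_filter_mem_le_encard {q | A (F i) q}).trans (hΔ (F i))
  have hC := card_le_card hsub
  rw [card_union_of_disjoint hCPS, card_union_of_disjoint hPS] at hC
  omega

theorem two_mul_score_le [Std.Symm A] (hΔ : ∀ p, {q | A p q}.encard ≤ Δ) (hF : IsFold A w F) :
    2 * score A w F ≤ (Δ - 2) * w.count false + 2 := by
  classical
  have hvertex (i : Fin w.length) :
      #{j | IsContact A w F i j ∨ IsContact A w F j i} ≤ (if w.get i = false then Δ - 2 else 0) +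
        ((if i.1 = 0 then 1 else 0) + (if i.1 + 1 = w.length then 1 else 0)) := by
    by_cases hi : w.get i = false
    · have := card_contacts_add_two_le hΔ hF i
      rw [if_pos hi]
      omega
    · rw [card_eq_zero.2 (filter_eq_empty_iff.2 fun j _ h => by unfold IsContact at h; tauto)]
      exact Nat.zero_le _
  have hends (p : ℕ → Prop) [DecidablePred p] (hp : ∀ a b, p a → p b → a = b) :
      #{i : Fin w.length | p i.1} ≤ 1 :=
    card_le_one.2 fun a ha b hb => Fin.ext (hp _ _ (mem_filter.1 ha).2 (mem_filter.1 hb).2)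
  have h0 := hends (· = 0) (by omega)
  have hlast := hends (· + 1 = w.length) (by omega)
  calc 2 * score A w F = ∑ i, #{j | IsContact A w F i j ∨ IsContact A w F j i} :=
        two_mul_score_eq_sum_card_contacts
    _ ≤ ∑ i : Fin w.length, ((if w.get i = false then Δ - 2 else 0) +
        ((if i.1 = 0 then 1 else 0) + (if i.1 + 1 = w.length then 1 else 0))) :=
        sum_le_sum fun i _ => hvertex i
    _ = (Δ - 2) * w.count false + (#{i : Fin w.length | i.1 = 0} +
        #{i : Fin w.length | i.1 + 1 = w.length}) := by
      rw [sum_add_distrib, sum_add_distrib, ← sum_filter, sum_const, smul_eq_mul, mul_comm,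
        List.card_filter_get_eq_count, card_filter, card_filter]
    _ ≤ (Δ - 2) * w.count false + 2 := by omega

end Contacts

/-- For every binary word `w`, the optimal 2D rectangular-lattice fold score satisfies
`J(w) ≤ Z(w) + 1`. -/
theorem stmt4 (w : List Bool) : J adj2 w ≤ w.count false + 1 := by
  refine csSup_le' ?_
  rintro _ ⟨F, hF, rfl⟩
  have : 2 * score adj2 w F ≤ 2 * w.count false + 2 := two_mul_score_le encard_setOf_adj2_le hF
  omega
end

section
/- Let w ∈ {0,1}* and consider folds of 1w1 in the hexagonal (3-regular) lattice. Then the maximum score over all folds is at most Z(w)/2, where Z(w) is the number of zeros of w. Equivalently, 2·J_hex(1w1) ≤ Z(w). -/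
lemma hex_symm {p q : ℤ × ℤ} (h : hexAdj p q) : hexAdj q p := by
  obtain ⟨p1, p2⟩ := p; obtain ⟨q1, q2⟩ := q
  simp only [hexAdj] at h ⊢
  omega

lemma hex_mem0 {p1 p2 : ℤ} {q : ℤ × ℤ} (h : hexAdj (p1, p2) q) (hpar : (p1 + p2) % 2 = 0) :
    q = (p1 - 1, p2) ∨ q = (p1 + 1, p2) ∨ q = (p1, p2 + 1) := by
  obtain ⟨q1, q2⟩ := q
  simp only [hexAdj, Prod.mk.injEq] at h ⊢
  omega

lemma hex_mem1 {p1 p2 : ℤ} {q : ℤ × ℤ} (h : hexAdj (p1, p2) q) (hpar : (p1 + p2) % 2 = 1) :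
    q = (p1 - 1, p2) ∨ q = (p1 + 1, p2) ∨ q = (p1, p2 - 1) := by
  obtain ⟨q1, q2⟩ := q
  simp only [hexAdj, Prod.mk.injEq] at h ⊢
  omega

lemma three_pigeon {α : Type*} {A B C x y z t : α}
    (hx : x = A ∨ x = B ∨ x = C) (hy : y = A ∨ y = B ∨ y = C)
    (hz : z = A ∨ z = B ∨ z = C) (ht : t = A ∨ t = B ∨ t = C)
    (hxy : x ≠ y) (hzx : z ≠ x) (hzy : z ≠ y) (htx : t ≠ x) (hty : t ≠ y) : z = t := by
  rcases hx with rfl | rfl | rfl <;> rcases hy with rfl | rfl | rfl <;>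
    rcases hz with rfl | rfl | rfl <;> rcases ht with rfl | rfl | rfl <;>
    first
      | rfl
      | (exact absurd rfl hxy) | (exact absurd rfl hzx) | (exact absurd rfl hzy)
      | (exact absurd rfl htx) | (exact absurd rfl hty)

lemma hex_unique {p x y z t : ℤ × ℤ} (hx : hexAdj p x) (hy : hexAdj p y) (hz : hexAdj p z)
    (ht : hexAdj p t) (hxy : x ≠ y) (hzx : z ≠ x) (hzy : z ≠ y) (htx : t ≠ x) (hty : t ≠ y) :
    z = t := by
  obtain ⟨p1, p2⟩ := p
  have hpar : (p1 + p2) % 2 = 0 ∨ (p1 + p2) % 2 = 1 := by omega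
  rcases hpar with hpar | hpar
  · exact three_pigeon (hex_mem0 hx hpar) (hex_mem0 hy hpar) (hex_mem0 hz hpar)
      (hex_mem0 ht hpar) hxy hzx hzy htx hty
  · exact three_pigeon (hex_mem1 hx hpar) (hex_mem1 hy hpar) (hex_mem1 hz hpar)
      (hex_mem1 ht hpar) hxy hzx hzy htx hty

lemma count_aux (l : List Bool) (b : Bool) :
    (Finset.univ.filter fun i : Fin l.length => l.get i = b).card = l.count b := by
  induction l with
  | nil => simp
  | cons a t ih =>
    rw [Finset.card_filter]
    change (∑ i : Fin (t.length+1), if (a::t).get i = b then 1 else 0) = _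
    rw [Fin.sum_univ_succ, List.count_cons, ← ih, Finset.card_filter]
    simp [add_comm]
    cases a <;> cases b <;> simp

lemma main_aux (l : List Bool) (F : Fin l.length → ℤ × ℤ)
    (hinj : Function.Injective F)
    (hadj : ∀ (i : ℕ) (h : i + 1 < l.length), hexAdj (F ⟨i, by omega⟩) (F ⟨i + 1, h⟩))
    (hint : ∀ i : Fin l.length, l.get i = false → 0 < i.1 ∧ i.1 + 1 < l.length) :
    2 * score hexAdj l F ≤
      (Finset.univ.filter fun i : Fin l.length => l.get i = false).card := by
  classical
  have hne : ∀ a b : Fin l.length, a ≠ b → F a ≠ F b := fun a b h hc => h (hinj hc)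
  -- uniqueness of nonconsecutive neighbor
  have key : ∀ i j k : Fin l.length, l.get i = false →
      (i.1 + 2 ≤ j.1 ∨ j.1 + 2 ≤ i.1) → (i.1 + 2 ≤ k.1 ∨ k.1 + 2 ≤ i.1) →
      hexAdj (F i) (F j) → hexAdj (F i) (F k) → j = k := by
    intro i j k hi hj hk haj hak
    obtain ⟨h0, h1⟩ := hint i hi
    have hx : hexAdj (F i) (F ⟨i.1 - 1, by omega⟩) := by
      have h2 := hadj (i.1 - 1) (by omega)
      have e : (⟨i.1 - 1 + 1, by omega⟩ : Fin l.length) = i := Fin.ext (show i.1 - 1 + 1 = i.1 by omega)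
      rw [e] at h2
      exact hex_symm h2
    have hy : hexAdj (F i) (F ⟨i.1 + 1, h1⟩) := by
      have h2 := hadj i.1 h1
      have e : (⟨i.1, by omega⟩ : Fin l.length) = i := Fin.ext rfl
      rw [e] at h2
      exact h2
    refine hinj (hex_unique hx hy haj hak (hne _ _ ?_) (hne _ _ ?_) (hne _ _ ?_)
      (hne _ _ ?_) (hne _ _ ?_)) <;>
      simp only [ne_eq, Fin.ext_iff, Fin.val_mk] <;> omega
  -- counting
  have hS : {p : Fin l.length × Fin l.length |
      p.1.1 + 2 ≤ p.2.1 ∧ l.get p.1 = false ∧ l.get p.2 = false ∧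
      hexAdj (F p.1) (F p.2)}.Finite := Set.toFinite _
  rw [score, Set.ncard_eq_toFinset_card _ hS]
  set T := hS.toFinset with hT
  set Z := Finset.univ.filter (fun i : Fin l.length => l.get i = false) with hZ
  have hinjOn : ∀ pb ∈ T ×ˢ (Finset.univ : Finset Bool), ∀ qc ∈ T ×ˢ (Finset.univ : Finset Bool),
      (fun pb : (Fin l.length × Fin l.length) × Bool => if pb.2 then pb.1.1 else pb.1.2) pb =
      (fun pb : (Fin l.length × Fin l.length) × Bool => if pb.2 then pb.1.1 else pb.1.2) qc →
      pb = qc := by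
    rintro ⟨p, b⟩ hp ⟨q, c⟩ hq he
    simp only [Finset.mem_product, hT, Set.Finite.mem_toFinset, Set.mem_setOf_eq] at hp hq
    obtain ⟨⟨hp1, hp2, hp3, hp4⟩, -⟩ := hp
    obtain ⟨⟨hq1, hq2, hq3, hq4⟩, -⟩ := hq
    cases b <;> cases c <;> simp only [if_true, if_false, Bool.false_eq_true] at he ⊢
    · -- p.2 = q.2
      have := key p.2 p.1 q.1 hp3 (Or.inr (by omega)) (by rw [he]; exact Or.inr (by omega))
        (hex_symm hp4) (by rw [he]; exact hex_symm hq4)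
      exact Prod.ext_iff.mpr ⟨Prod.ext_iff.mpr ⟨this, he⟩, rfl⟩
    · -- p.2 = q.1 : impossible
      exfalso
      have := key p.2 p.1 q.2 hp3 (Or.inr (by omega)) (by rw [he]; exact Or.inl (by omega))
        (hex_symm hp4) (by rw [he]; exact hq4)
      have := congrArg Fin.val this
      omega
    · -- p.1 = q.2 : impossible
      exfalso
      have := key p.1 p.2 q.1 hp2 (Or.inl (by omega)) (by rw [he]; exact Or.inr (by omega))
        hp4 (by rw [he]; exact hex_symm hq4)
      have := congrArg Fin.val this
      omega
    · -- p.1 = q.1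
      have := key p.1 p.2 q.2 hp2 (Or.inl (by omega)) (by rw [he]; exact Or.inl (by omega))
        hp4 (by rw [he]; exact hq4)
      exact Prod.ext_iff.mpr ⟨Prod.ext_iff.mpr ⟨he, this⟩, rfl⟩
  have hmaps : ∀ pb ∈ T ×ˢ (Finset.univ : Finset Bool),
      (if pb.2 then pb.1.1 else pb.1.2) ∈ Z := by
    rintro ⟨p, b⟩ hp
    simp only [Finset.mem_product, hT, Set.Finite.mem_toFinset, Set.mem_setOf_eq] at hp
    obtain ⟨⟨-, hp2, hp3, -⟩, -⟩ := hp
    simp only [List.get_eq_getElem] at hp2 hp3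
    cases b <;> simp [hZ, hp2, hp3]
  have hcard := Finset.card_le_card_of_injOn _ hmaps hinjOn
  rw [Finset.card_product, Finset.card_univ, Fintype.card_bool] at hcard
  omega

/-- Every fold of `1w1` in the hexagonal lattice scores at most `Z(w)/2`,
i.e. twice the score is at most `Z(w)`. -/
theorem stmt5 (w : List Bool) (F : Fin ([true] ++ w ++ [true]).length → ℤ × ℤ)
    (hF : IsFold hexAdj ([true] ++ w ++ [true]) F) :
    2 * score hexAdj ([true] ++ w ++ [true]) F ≤ w.count false := by
  obtain ⟨hinj, hadj⟩ := hF
  have hint : ∀ i : Fin ([true] ++ w ++ [true]).length,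
      ([true] ++ w ++ [true]).get i = false → 0 < i.1 ∧ i.1 + 1 < ([true] ++ w ++ [true]).length := by
    intro i hi
    have hlen : ([true] ++ w ++ [true]).length = w.length + 2 := by simp
    constructor
    · rcases Nat.eq_zero_or_pos i.1 with h0 | h0
      · exfalso
        have e : i = ⟨0, by omega⟩ := Fin.ext h0
        rw [e] at hi
        simp [List.get_eq_getElem] at hi
      · exact h0
    · by_contra h
      have hlast : i.1 = w.length + 1 := by have := i.2; omega
      have e : i = ⟨w.length + 1, by omega⟩ := Fin.ext hlast
      rw [e] at hi
      simp only [List.get_eq_getElem] at hi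
      rw [List.getElem_append_right (by simp)] at hi
      simp at hi
  have h := main_aux ([true] ++ w ++ [true]) F hinj hadj hint
  rw [count_aux] at h
  simpa using h
end

section
/- For every binary word x, the maximum 2D rectangular lattice fold score satisfies J(x1) ≤ J(x) and J(1x) ≤ J(x), where x1 (resp. 1x) denotes appending (resp. prepending) the letter 1 to x. -/
/-! Restricting a fold of `u ++ v ++ u'` to the positions of `v` gives a fold of `v`. When every
letter of `u` and `u'` is `1`, each scoring pair lies inside that window, so the restricted fold
has the same score. -/

lemma bddAbove_scores (A : ℤ × ℤ → ℤ × ℤ → Prop) (w : List Bool) :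
    BddAbove {s | ∃ F, IsFold A w F ∧ score A w F = s} := by
  refine ⟨w.length * w.length, ?_⟩
  rintro s ⟨F, -, rfl⟩
  calc score A w F ≤ (Set.univ : Set (Fin w.length × Fin w.length)).ncard :=
        Set.ncard_le_ncard (Set.subset_univ _) Set.finite_univ
    _ = w.length * w.length := by simp [Set.ncard_univ]

section Window

variable {A : ℤ × ℤ → ℤ × ℤ → Prop} {u v u' : List Bool}

def windowEmb (u v u' : List Bool) : Fin v.length ↪ Fin (u ++ v ++ u').length :=
  ⟨fun i => ⟨u.length + i, by simp; omega⟩, fun i j h => by simpa [Fin.ext_iff] using h⟩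

@[simp]
lemma windowEmb_val (i : Fin v.length) : (windowEmb u v u' i : ℕ) = u.length + i := rfl

@[simp]
lemma get_windowEmb (i : Fin v.length) : (u ++ v ++ u').get (windowEmb u v u' i) = v.get i := by
  simp [List.getElem_append_left, List.getElem_append_right]

lemma exists_windowEmb_eq_of_get_eq_false (hu : ∀ b ∈ u, b = true) (hu' : ∀ b ∈ u', b = true)
    {j : Fin (u ++ v ++ u').length} (hj : (u ++ v ++ u').get j = false) :
    ∃ i, windowEmb u v u' i = j := by
  obtain ⟨j, hjlt⟩ := j
  simp only [List.length_append] at hjlt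
  by_cases hju : j < u.length
  · rw [List.get_eq_getElem, List.getElem_append_left (by simp; omega),
      List.getElem_append_left hju] at hj
    exact absurd (hj.symm.trans (hu _ (List.getElem_mem _))) Bool.false_ne_true
  by_cases hjv : j < u.length + v.length
  · exact ⟨⟨j - u.length, by omega⟩, Fin.ext (by simp; omega)⟩
  · rw [List.get_eq_getElem, List.getElem_append_right (by simp; omega)] at hj
    exact absurd (hj.symm.trans (hu' _ (List.getElem_mem _))) Bool.false_ne_true

lemma IsFold.comp_windowEmb {F : Fin (u ++ v ++ u').length → ℤ × ℤ}
    (hF : IsFold A (u ++ v ++ u') F) : IsFold A v (F ∘ windowEmb u v u') :=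
  ⟨hF.1.comp (windowEmb u v u').injective, fun i _ => hF.2 (u.length + i) (by simp; omega)⟩

lemma score_comp_windowEmb (hu : ∀ b ∈ u, b = true) (hu' : ∀ b ∈ u', b = true)
    (F : Fin (u ++ v ++ u').length → ℤ × ℤ) :
    score A v (F ∘ windowEmb u v u') = score A (u ++ v ++ u') F := by
  have hinj := (windowEmb u v u').injective
  rw [score, score, ← Set.ncard_image_of_injective _ (hinj.prodMap hinj)]
  congr 1
  ext ⟨j, k⟩
  simp only [Set.mem_image, Set.mem_ofPred_eq, Prod.exists, Prod.map_apply, Prod.mk.injEq]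
  constructor
  · rintro ⟨a, b, ⟨hab, ha, hb, hA⟩, rfl, rfl⟩
    exact ⟨by simp; omega, by simpa, by simpa, hA⟩
  · rintro ⟨hjk, hj, hk, hA⟩
    obtain ⟨a, rfl⟩ := exists_windowEmb_eq_of_get_eq_false hu hu' hj
    obtain ⟨b, rfl⟩ := exists_windowEmb_eq_of_get_eq_false hu hu' hk
    exact ⟨a, b, ⟨by simp at hjk; omega, by simpa using hj, by simpa using hk, hA⟩, rfl, rfl⟩

theorem J_append_append_le (hu : ∀ b ∈ u, b = true)
    (hu' : ∀ b ∈ u', b = true) : J A (u ++ v ++ u') ≤ J A v := by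
  refine csSup_le' ?_
  rintro s ⟨F, hF, rfl⟩
  rw [← score_comp_windowEmb hu hu' F]
  exact le_csSup (bddAbove_scores A v) ⟨_, hF.comp_windowEmb, rfl⟩

end Window

/-- Appending or prepending the letter 1 cannot increase the optimal 2D rectangular
fold score: `J(x1) ≤ J(x)` and `J(1x) ≤ J(x)`. -/
theorem stmt7 (x : List Bool) :
    J adj2 (x ++ [true]) ≤ J adj2 x ∧ J adj2 ([true] ++ x) ≤ J adj2 x :=
  ⟨by simpa using J_append_append_le (u := []) (v := x) (u' := [true]) (A := adj2) (by simp) (by simp),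
    by simpa using J_append_append_le (u := [true]) (v := x) (u' := []) (A := adj2) (by simp) (by simp)⟩
end

section
/- The word w = 011011011 1111111111 0110 110 (that is, (011)³ 1^{10} 0110 110, the k=0 case of the family (011)^3 1^{10} (0011)^k 0110 (1100)^k 110) admits a fold in the 2D rectangular lattice achieving score Z(w) + 1 = 9, where Z(w) = 8 is the number of zeros. Hence J(w) = Z(w) + 1. -/
/-! The fold `wordFold` realises seven contacts. Conversely, the square lattice is bipartite, so
along a fold only positions of different parity can be in contact. Charging each contact to its
even end, the even zeros 0, 6 and 22 have at most 4 − 1, 4 − 2 and 4 − 2 lattice neighbours not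
occupied by their chain neighbours, so no fold has more than 7 = Z(w) + 1 contacts. -/

open Finset

instance : DecidableRel adj2 := fun p q => inferInstanceAs (Decidable (d2 p q = 1))

lemma adj2_iff {p q : ℤ × ℤ} :
    adj2 p q ↔ q = p + (1, 0) ∨ q = p - (1, 0) ∨ q = p + (0, 1) ∨ q = p - (0, 1) := by
  simp only [adj2, d2, Prod.ext_iff, Prod.fst_add, Prod.snd_add, Prod.fst_sub, Prod.snd_sub]
  omega

lemma adj2_comm {p q : ℤ × ℤ} : adj2 p q ↔ adj2 q p := by
  simp only [adj2, d2]; omega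

lemma adj2.parity_ne {p q : ℤ × ℤ} (h : adj2 p q) : (p.1 + p.2) % 2 ≠ (q.1 + q.2) % 2 := by
  simp only [adj2, d2] at h; omega

lemma score_eq_card (A : ℤ × ℤ → ℤ × ℤ → Prop) [DecidableRel A] (w : List Bool)
    (F : Fin w.length → ℤ × ℤ) :
    score A w F = #{p : Fin w.length × Fin w.length |
      p.1.1 + 2 ≤ p.2.1 ∧ w.get p.1 = false ∧ w.get p.2 = false ∧ A (F p.1) (F p.2)} := by
  rw [score, ← Set.ncard_coe_finset, coe_filter]
  simp only [mem_univ, true_and]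

lemma J_eq_score_of_le {A : ℤ × ℤ → ℤ × ℤ → Prop} {w : List Bool} {F : Fin w.length → ℤ × ℤ}
    (hF : IsFold A w F) (hmax : ∀ G, IsFold A w G → score A w G ≤ score A w F) :
    J A w = score A w F :=
  IsGreatest.csSup_eq ⟨⟨F, hF, rfl⟩, by rintro _ ⟨G, hG, rfl⟩; exact hmax G hG⟩

section Fold

variable {w : List Bool} {F : Fin w.length → ℤ × ℤ}

def contacts (F : Fin w.length → ℤ × ℤ) (i : Fin w.length) : Finset (Fin w.length) :=
  {j | (i.1 + 2 ≤ j.1 ∨ j.1 + 2 ≤ i.1) ∧ adj2 (F i) (F j)}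

def chainNeighbors (i : Fin w.length) : Finset (Fin w.length) :=
  {j | j.1 + 1 = i.1 ∨ i.1 + 1 = j.1}

def evenZeros (w : List Bool) : Finset (Fin w.length) :=
  {e | e.1 % 2 = 0 ∧ w.get e = false}

lemma IsFold.parity_eq_parity_zero (hF : IsFold adj2 w F) :
    ∀ (i : ℕ) (hi : i < w.length),
      ((F ⟨i, hi⟩).1 + (F ⟨i, hi⟩).2 + i) % 2 = ((F ⟨0, by omega⟩).1 + (F ⟨0, by omega⟩).2) % 2
  | 0, _ => by simp
  | i + 1, hi => by
    have step := (hF.2 i hi).parity_ne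
    have ih := hF.parity_eq_parity_zero i (by omega)
    push_cast
    omega

lemma IsFold.parity_ne_of_adj2 (hF : IsFold adj2 w F) {i j : Fin w.length}
    (h : adj2 (F i) (F j)) : i.1 % 2 ≠ j.1 % 2 := by
  have hi := hF.parity_eq_parity_zero i.1 i.2
  have hj := hF.parity_eq_parity_zero j.1 j.2
  have := h.parity_ne
  simp only [Fin.eta] at hi hj
  omega

lemma IsFold.adj2_of_succ_eq (hF : IsFold adj2 w F) {i j : Fin w.length} (h : i.1 + 1 = j.1) :
    adj2 (F i) (F j) := by
  obtain ⟨i, hi⟩ := i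
  obtain ⟨j, hj⟩ := j
  subst h
  exact hF.2 i hj

lemma card_filter_adj2_le_four (hF : Function.Injective F) (i : Fin w.length) :
    #{j | adj2 (F i) (F j)} ≤ 4 := by
  calc #{j | adj2 (F i) (F j)}
      ≤ #{F i + (1, 0), F i - (1, 0), F i + (0, 1), F i - (0, 1)} :=
        card_le_card_of_injOn F (fun j hj => by simpa [adj2_iff] using hj) hF.injOn
    _ ≤ 4 := card_le_four

lemma IsFold.card_contacts_add_card_chainNeighbors_le (hF : IsFold adj2 w F) (i : Fin w.length) :
    #(contacts F i) + #(chainNeighbors i) ≤ 4 := by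
  have hdisj : Disjoint (contacts F i) (chainNeighbors i) := by
    rw [contacts, chainNeighbors, disjoint_filter]; omega
  have hsub : contacts F i ∪ chainNeighbors i ⊆ ({j | adj2 (F i) (F j)} : Finset _) := by
    intro j hj
    simp only [contacts, chainNeighbors, mem_union, mem_filter, mem_univ, true_and] at hj ⊢
    rcases hj with ⟨-, h⟩ | h | h
    · exact h
    · exact adj2_comm.mp (hF.adj2_of_succ_eq h)
    · exact hF.adj2_of_succ_eq h
  rw [← card_union_of_disjoint hdisj]
  exact (card_le_card hsub).trans (card_filter_adj2_le_four hF.1 i)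

lemma IsFold.score_le_sum_card_contacts (hF : IsFold adj2 w F) :
    score adj2 w F ≤ ∑ e ∈ evenZeros w, #(contacts F e) := by
  rw [score_eq_card, ← card_sigma]
  refine card_le_card_of_injOn
    (fun p => if p.1.1 % 2 = 0 then ⟨p.1, p.2⟩ else ⟨p.2, p.1⟩) ?_ ?_
  · rintro ⟨a, b⟩ hp
    simp only [coe_filter, mem_univ, true_and, Set.mem_ofPred_eq] at hp
    obtain ⟨hab, ha, hb, hadj⟩ := hp
    have := hF.parity_ne_of_adj2 hadj
    simp only [mem_coe]
    split_ifs with h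
    · simp only [mem_sigma, evenZeros, contacts, mem_filter, mem_univ, true_and]
      exact ⟨⟨h, ha⟩, Or.inl hab, hadj⟩
    · simp only [mem_sigma, evenZeros, contacts, mem_filter, mem_univ, true_and]
      exact ⟨⟨by omega, hb⟩, Or.inr hab, adj2_comm.mp hadj⟩
  · rintro ⟨a, b⟩ hp ⟨c, d⟩ hq heq
    simp only [coe_filter, mem_univ, true_and, Set.mem_ofPred_eq] at hp hq
    simp only at heq
    split_ifs at heq <;> simp_all [Sigma.ext_iff] <;> omega

end Fold

def word : List Bool :=
  [false, true, true, false, true, true, false, true, true] ++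
    List.replicate 10 true ++ [false, true, true, false] ++ [true, true, false]

def wordPath : List (ℤ × ℤ) :=
  let u : ℤ × ℤ := (0, 1)
  let d : ℤ × ℤ := (0, -1)
  let l : ℤ × ℤ := (-1, 0)
  let r : ℤ × ℤ := (1, 0)
  [u, r, d, r, d, l, d, r, r, u, u, u, u, l, l, l, l, d, d, l, d, r, d, r, u].scanl (· + ·) 0

def wordFold (i : Fin word.length) : ℤ × ℤ := wordPath[i.1]'(i.2.trans_eq rfl)

lemma isFold_wordFold : IsFold adj2 word wordFold := by
  refine ⟨by decide, fun i hi => ?_⟩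
  have : i < 25 := by have : word.length = 26 := rfl; omega
  interval_cases i <;> decide +revert

lemma score_wordFold : score adj2 word wordFold = 7 := by
  rw [score_eq_card]
  decide

lemma score_word_le {F : Fin word.length → ℤ × ℤ} (hF : IsFold adj2 word F) :
    score adj2 word F ≤ 7 :=
  calc score adj2 word F
      ≤ ∑ e ∈ evenZeros word, #(contacts F e) := hF.score_le_sum_card_contacts
    _ ≤ ∑ e ∈ evenZeros word, (4 - #(chainNeighbors e)) :=
        sum_le_sum fun e _ => by have := hF.card_contacts_add_card_chainNeighbors_le e; omega
    _ = 7 := by decide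

/-- The word `(011)^3 1^10 0110 110` (the `k = 0` member of the family
`(011)^3 1^10 (0011)^k 0110 (1100)^k 110`) admits a fold in the 2D rectangular lattice
achieving the maximal possible score `Z(w) + 1`; hence `J(w) = Z(w) + 1`. -/
theorem stmt9 :
    let w : List Bool :=
      [false, true, true, false, true, true, false, true, true] ++
        List.replicate 10 true ++ [false, true, true, false] ++ [true, true, false]
    (∃ F : Fin w.length → ℤ × ℤ, IsFold adj2 w F ∧ score adj2 w F = w.count false + 1) ∧
      J adj2 w = w.count false + 1 := by
  intro w
  have hzeros : w.count false + 1 = 7 := by decide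
  rw [hzeros]
  refine ⟨⟨wordFold, isFold_wordFold, score_wordFold⟩, ?_⟩
  exact (J_eq_score_of_le isFold_wordFold fun G hG => score_wordFold ▸ score_word_le hG).trans
    score_wordFold
end

section
/- Among all subsets of ℤ³ of cardinality n³, the n×n×n cube uniquely (up to translation) maximizes the number of internal edges, which equals 3n²(n−1). -/
set_option maxHeartbeats 1000000

/-- Adjacency (L¹ distance 1) in the 3D rectangular lattice. -/
def adj3 (p q : ℤ × ℤ × ℤ) : Prop :=
  (p.1 - q.1).natAbs + (p.2.1 - q.2.1).natAbs + (p.2.2 - q.2.2).natAbs = 1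

/-- The number of internal edges (unordered adjacent pairs) of a set `S ⊆ ℤ³`. -/
noncomputable def intEdges3 (S : Set (ℤ × ℤ × ℤ)) : ℕ :=
  Set.ncard {e : Sym2 (ℤ × ℤ × ℤ) | ∃ x ∈ S, ∃ y ∈ S, adj3 x y ∧ e = Sym2.mk x y}

/-- The `n × n × n` cube `{0,…,n−1}³` in `ℤ³`. -/
def cube (n : ℕ) : Set (ℤ × ℤ × ℤ) :=
  {p | 0 ≤ p.1 ∧ p.1 < n ∧ 0 ≤ p.2.1 ∧ p.2.1 < n ∧ 0 ≤ p.2.2 ∧ p.2.2 < n}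

abbrev P3 := ℤ × ℤ × ℤ
abbrev ev1 : P3 := (1,0,0)
abbrev ev2 : P3 := (0,1,0)
abbrev ev3 : P3 := (0,0,1)

def Dd (e : P3) (F : Finset P3) : Finset P3 := F.filter (fun p => p + e ∈ F)

lemma adj3_iff (p q : P3) : adj3 p q ↔
    (q = p + ev1 ∨ p = q + ev1) ∨ (q = p + ev2 ∨ p = q + ev2) ∨ (q = p + ev3 ∨ p = q + ev3) := by
  obtain ⟨a,b,c⟩ := p; obtain ⟨d,e,f⟩ := q
  simp [adj3, Prod.ext_iff]
  omega

lemma smk_inj {e : P3} (he : e + e ≠ 0) {p q : P3}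
    (h : Sym2.mk p (p + e) = Sym2.mk q (q + e)) : p = q := by
  rw [Sym2.eq_iff] at h
  rcases h with ⟨h1, _⟩ | ⟨h1, h2⟩
  · exact h1
  · exfalso; apply he
    have h3 : p = p + (e + e) := by rw [← add_assoc, h2, h1]
    have := left_eq_add.mp h3
    exact this


lemma smk_disj {e e' : P3} (hne : e ≠ e') (hsum : e + e' ≠ 0) {p q : P3}
    (h : Sym2.mk p (p + e) = Sym2.mk q (q + e')) : False := by
  rw [Sym2.eq_iff] at h
  rcases h with ⟨h1, h2⟩ | ⟨h1, h2⟩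
  · subst h1; exact hne (add_right_injective p h2)
  · apply hsum
    have h3 : q = q + (e' + e) := by rw [← add_assoc, ← h1, h2]
    have := left_eq_add.mp h3
    rw [add_comm] at this; exact this

def edgesF (e : P3) (F : Finset P3) : Finset (Sym2 P3) :=
  (Dd e F).image (fun p => Sym2.mk p (p + e))

lemma edges_set_eq (F : Finset P3) :
    {e : Sym2 P3 | ∃ x ∈ (F : Set P3), ∃ y ∈ (F : Set P3), adj3 x y ∧ e = Sym2.mk x y}
      = ↑((edgesF ev1 F ∪ edgesF ev2 F) ∪ edgesF ev3 F) := by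
  ext s
  simp only [Set.mem_setOf_eq, Finset.coe_union, Set.mem_union, Finset.mem_coe,
    edgesF, Finset.mem_image, Dd, Finset.mem_filter]
  constructor
  · rintro ⟨x, hx, y, hy, hadj, rfl⟩
    rcases (adj3_iff x y).mp hadj with (h|h)|(h|h)|(h|h)
    · exact Or.inl (Or.inl ⟨x, ⟨hx, h ▸ hy⟩, by rw [h]⟩)
    · exact Or.inl (Or.inl ⟨y, ⟨hy, h ▸ hx⟩, by rw [h, Sym2.eq_swap]⟩)
    · exact Or.inl (Or.inr ⟨x, ⟨hx, h ▸ hy⟩, by rw [h]⟩)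
    · exact Or.inl (Or.inr ⟨y, ⟨hy, h ▸ hx⟩, by rw [h, Sym2.eq_swap]⟩)
    · exact Or.inr ⟨x, ⟨hx, h ▸ hy⟩, by rw [h]⟩
    · exact Or.inr ⟨y, ⟨hy, h ▸ hx⟩, by rw [h, Sym2.eq_swap]⟩
  · have adj : ∀ (e : P3), (e = ev1 ∨ e = ev2 ∨ e = ev3) → ∀ p : P3, adj3 p (p + e) := by
      rintro e (rfl|rfl|rfl) ⟨a,b,c⟩ <;> simp [adj3]
    rintro ((⟨p, ⟨hp, hpe⟩, rfl⟩|⟨p, ⟨hp, hpe⟩, rfl⟩)|⟨p, ⟨hp, hpe⟩, rfl⟩)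
    · exact ⟨p, hp, p + ev1, hpe, adj ev1 (by tauto) p, rfl⟩
    · exact ⟨p, hp, p + ev2, hpe, adj ev2 (by tauto) p, rfl⟩
    · exact ⟨p, hp, p + ev3, hpe, adj ev3 (by tauto) p, rfl⟩

lemma edges_decomp (F : Finset P3) :
    intEdges3 ↑F = (Dd ev1 F).card + (Dd ev2 F).card + (Dd ev3 F).card := by
  have hsum12 : ev1 + ev2 ≠ 0 := by simp [Prod.ext_iff]
  have hsum13 : ev1 + ev3 ≠ 0 := by simp [Prod.ext_iff]
  have hsum23 : ev2 + ev3 ≠ 0 := by simp [Prod.ext_iff]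
  have hne12 : ev1 ≠ ev2 := by simp [Prod.ext_iff]
  have hne13 : ev1 ≠ ev3 := by simp [Prod.ext_iff]
  have hne23 : ev2 ≠ ev3 := by simp [Prod.ext_iff]
  have hcard : ∀ e : P3, e + e ≠ 0 → (edgesF e F).card = (Dd e F).card := by
    intro e he
    exact Finset.card_image_of_injective _ (fun p q h => smk_inj he h)
  have hd12 : Disjoint (edgesF ev1 F) (edgesF ev2 F) := by
    rw [Finset.disjoint_left]
    rintro s hs1 hs2
    simp only [edgesF, Finset.mem_image] at hs1 hs2
    obtain ⟨p, _, rfl⟩ := hs1; obtain ⟨q, _, h⟩ := hs2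
    exact smk_disj hne12 hsum12 h.symm
  have hd13 : Disjoint (edgesF ev1 F) (edgesF ev3 F) := by
    rw [Finset.disjoint_left]
    rintro s hs1 hs2
    simp only [edgesF, Finset.mem_image] at hs1 hs2
    obtain ⟨p, _, rfl⟩ := hs1; obtain ⟨q, _, h⟩ := hs2
    exact smk_disj hne13 hsum13 h.symm
  have hd23 : Disjoint (edgesF ev2 F) (edgesF ev3 F) := by
    rw [Finset.disjoint_left]
    rintro s hs1 hs2
    simp only [edgesF, Finset.mem_image] at hs1 hs2
    obtain ⟨p, _, rfl⟩ := hs1; obtain ⟨q, _, h⟩ := hs2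
    exact smk_disj hne23 hsum23 h.symm
  have hd : Disjoint (edgesF ev1 F ∪ edgesF ev2 F) (edgesF ev3 F) :=
    Finset.disjoint_union_left.mpr ⟨hd13, hd23⟩
  rw [intEdges3, edges_set_eq, Set.ncard_coe_finset,
    Finset.card_union_of_disjoint hd, Finset.card_union_of_disjoint hd12,
    hcard ev1 (by simp [Prod.ext_iff]), hcard ev2 (by simp [Prod.ext_iff]),
    hcard ev3 (by simp [Prod.ext_iff])]


section Col
variable {W : Type} [DecidableEq W] (F : Finset P3) (e : P3)
  (c : P3 → ℤ) (w : P3 → W) (mk : ℤ → W → P3)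
  (h1 : ∀ x u, c (mk x u) = x) (h2 : ∀ x u, w (mk x u) = u)
  (h3 : ∀ p, mk (c p) (w p) = p) (h4 : ∀ x u, mk x u + e = mk (x+1) u)

include h1 h2 h3 h4

-- boundary has at least one point above each projection point, and they partition with Dd
lemma col_card_le : (Dd e F).card + (F.image w).card ≤ F.card := by
  classical
  have hstep : ∀ p : P3, p + e = mk (c p + 1) (w p) := by
    intro p; conv_lhs => rw [← h3 p]
    rw [h4]
  have hpart : (Dd e F).card + (F.filter (fun p => p + e ∉ F)).card = F.card := by
    exact Finset.card_filter_add_card_filter_not _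
  have hsurj : Set.SurjOn w ↑(F.filter (fun p => p + e ∉ F)) ↑(F.image w) := by
    intro u hu
    simp only [Finset.coe_image, Set.mem_image, Finset.mem_coe] at hu
    obtain ⟨p, hp, rfl⟩ := hu
    have hne : (F.filter (fun q => w q = w p)).Nonempty := ⟨p, by simp [hp]⟩
    obtain ⟨q, hq, hmax⟩ := Finset.exists_max_image _ c hne
    simp only [Finset.mem_filter] at hq
    refine ⟨q, ?_, hq.2⟩
    simp only [Finset.coe_filter, Set.mem_setOf_eq]
    refine ⟨hq.1, fun hqe => ?_⟩
    have hwqe : w (q + e) = w p := by rw [hstep q, h2, hq.2]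
    have := hmax (q + e) (by simp [hqe, hwqe])
    rw [hstep q, h1] at this
    omega
  have := Finset.card_le_card_of_surjOn w hsurj
  omega

lemma col_interval (heq : (Dd e F).card + (F.image w).card = F.card)
    (u : W) (hu : u ∈ F.image w) :
    ∃ a b : ℤ, ∀ x : ℤ, mk x u ∈ F ↔ x ∈ Finset.Icc a b := by
  classical
  have hstep : ∀ p : P3, p + e = mk (c p + 1) (w p) := by
    intro p; conv_lhs => rw [← h3 p]
    rw [h4]
  set Bd := F.filter (fun p => p + e ∉ F) with hBd
  have hpart : (Dd e F).card + Bd.card = F.card :=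
    Finset.card_filter_add_card_filter_not _
  have hcardBd : Bd.card = (F.image w).card := by omega
  -- every boundary fiber has card exactly 1
  have hfib : ∀ v ∈ F.image w, 1 ≤ (Bd.filter (fun p => w p = v)).card := by
    intro v hv
    simp only [Finset.mem_image] at hv
    obtain ⟨p, hp, rfl⟩ := hv
    have hne : (F.filter (fun q => w q = w p)).Nonempty := ⟨p, by simp [hp]⟩
    obtain ⟨q, hq, hmax⟩ := Finset.exists_max_image _ c hne
    simp only [Finset.mem_filter] at hq
    have hqBd : q ∈ Bd := by
      simp only [hBd, Finset.mem_filter]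
      refine ⟨hq.1, fun hqe => ?_⟩
      have hwqe : w (q + e) = w p := by rw [hstep q, h2, hq.2]
      have := hmax (q + e) (by simp [hqe, hwqe])
      rw [hstep q, h1] at this
      omega
    have : (Bd.filter (fun r => w r = w p)).Nonempty := ⟨q, by simp [hqBd, hq.2]⟩
    exact Finset.card_pos.mpr this
  have hsum : Bd.card = ∑ v ∈ F.image w, (Bd.filter (fun p => w p = v)).card := by
    apply Finset.card_eq_sum_card_fiberwise
    intro p hp
    simp only [hBd, Finset.mem_filter] at hp
    exact Finset.mem_image_of_mem w (Finset.mem_filter.mp hp).1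
  have hone : ∀ v ∈ F.image w, (Bd.filter (fun p => w p = v)).card = 1 := by
    by_contra hcon
    push_neg at hcon
    obtain ⟨v, hv, hne1⟩ := hcon
    have h2le : 2 ≤ (Bd.filter (fun p => w p = v)).card := by
      have := hfib v hv; omega
    have : (F.image w).card + 1 ≤ ∑ v ∈ F.image w, (Bd.filter (fun p => w p = v)).card := by
      calc (F.image w).card + 1
          = (∑ _v ∈ F.image w, 1) + ∑ v' ∈ F.image w, (if v' = v then 1 else 0) := by
            rw [Finset.sum_const, smul_eq_mul, mul_one, Finset.sum_ite_eq' (F.image w) v (fun _ => 1), if_pos hv]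
        _ = ∑ v' ∈ F.image w, (1 + if v' = v then 1 else 0) := Finset.sum_add_distrib.symm
        _ ≤ ∑ v' ∈ F.image w, (Bd.filter (fun p => w p = v')).card := by
            apply Finset.sum_le_sum
            intro i hi
            by_cases hiv : i = v
            · subst hiv; simpa using h2le
            · simp only [if_neg hiv]; simpa using hfib i hi
    omega
  -- now the fiber of u in F
  have hne : (F.filter (fun q => w q = u)).Nonempty := by
    simp only [Finset.mem_image] at hu
    obtain ⟨p, hp, rfl⟩ := hu
    exact ⟨p, by simp [hp]⟩
  obtain ⟨M, hM, hmax⟩ := Finset.exists_max_image _ c hne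
  obtain ⟨m, hm, hmin⟩ := Finset.exists_min_image _ c hne
  simp only [Finset.mem_filter] at hM hm
  have hMBd : M ∈ Bd := by
    simp only [hBd, Finset.mem_filter]
    refine ⟨hM.1, fun hqe => ?_⟩
    have hwqe : w (M + e) = u := by rw [hstep M, h2, hM.2]
    have := hmax (M + e) (by simp [hqe, hwqe])
    rw [hstep M, h1] at this
    omega
  -- uniqueness of boundary point in fiber u
  have huniq : ∀ p ∈ Bd, w p = u → p = M := by
    intro p hp hpw
    have hcard1 := hone u hu
    have hpmem : p ∈ Bd.filter (fun p => w p = u) := by simp [hp, hpw]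
    have hMmem : M ∈ Bd.filter (fun p => w p = u) := by simp [hMBd, hM.2]
    rw [Finset.card_eq_one] at hcard1
    obtain ⟨z, hz⟩ := hcard1
    rw [hz, Finset.mem_singleton] at hpmem hMmem
    rw [hpmem, hMmem]
  -- upward induction
  have hup : ∀ k : ℕ, ∀ x : ℤ, mk x u ∈ F → x + k ≤ c M → mk (x + k) u ∈ F := by
    intro k
    induction k with
    | zero => intro x hx _; simpa using hx
    | succ k ih =>
      intro x hx hle
      have hr : mk (x + k) u ∈ F := ih x hx (by omega)
      have hrne : mk (x + k) u ≠ M := by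
        intro hcon
        have : c (mk (x+k) u) = c M := by rw [hcon]
        rw [h1] at this
        omega
      have : mk (x + k) u + e ∈ F := by
        by_contra hcon
        have : mk (x+k) u ∈ Bd := by simp [hBd, Finset.mem_filter, hr, hcon]
        exact hrne (huniq _ this (h2 _ _))
      rw [h4] at this
      have hxk : x + (k+1 : ℕ) = (x + k) + 1 := by push_cast; ring
      rw [hxk]
      exact this
  refine ⟨c m, c M, fun x => ?_⟩
  constructor
  · intro hx
    have hxf : mk x u ∈ F.filter (fun q => w q = u) := by simp [hx, h2]
    have hle := hmax _ hxf
    have hge := hmin _ hxf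
    rw [h1] at hle hge
    simp only [Finset.mem_Icc]
    exact ⟨hge, hle⟩
  · intro hx
    simp only [Finset.mem_Icc] at hx
    have hmmk : mk (c m) u ∈ F := by
      rw [← hm.2, h3]; exact hm.1
    have := hup (x - c m).toNat (c m) hmmk (by omega)
    rwa [show c m + ((x - c m).toNat : ℤ) = x by omega] at this

end Col


def prA (F : Finset P3) : Finset (ℤ × ℤ) := F.image (fun p => (p.1, p.2.1))
def prB (F : Finset P3) : Finset (ℤ × ℤ) := F.image (fun p => (p.1, p.2.2))
def prC (F : Finset P3) : Finset (ℤ × ℤ) := F.image (fun p => p.2)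
def fibA (F : Finset P3) (a : ℤ × ℤ) : Finset P3 := F.filter (fun p => (p.1, p.2.1) = a)

lemma lw_sum (F : Finset P3) : F.card = ∑ a ∈ prA F, (fibA F a).card :=
  Finset.card_eq_sum_card_fiberwise (fun p hp => Finset.mem_image_of_mem _ hp)

lemma lw_cs (F : Finset P3) :
    F.card ^ 2 ≤ (prA F).card * ∑ a ∈ prA F, (fibA F a).card ^ 2 := by
  have h := Finset.sum_mul_sq_le_sq_mul_sq (prA F) (fun _ => (1:ℕ)) (fun a => (fibA F a).card)
  simp only [one_mul, one_pow, Finset.sum_const, smul_eq_mul, mul_one] at h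
  rw [lw_sum F]
  calc (∑ a ∈ prA F, (fibA F a).card)^2 ≤ (prA F).card * ∑ a ∈ prA F, (fibA F a).card ^2 := h
  _ = _ := rfl

def PP (F : Finset P3) : Finset (P3 × P3) :=
  (F ×ˢ F).filter (fun r => r.1.1 = r.2.1 ∧ r.1.2.1 = r.2.2.1)

def Psi (r : P3 × P3) : (ℤ × ℤ) × (ℤ × ℤ) := ((r.1.1, r.1.2.2), (r.2.2.1, r.2.2.2))

lemma pp_card (F : Finset P3) : (PP F).card = ∑ a ∈ prA F, (fibA F a).card ^ 2 := by
  have h : (PP F).card = ∑ a ∈ prA F, ((PP F).filter (fun r => (r.1.1, r.1.2.1) = a)).card := by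
    apply Finset.card_eq_sum_card_fiberwise
    intro r hr
    simp only [PP, Finset.mem_filter, Finset.mem_product] at hr
    exact Finset.mem_image_of_mem _ (Finset.mem_product.mp (Finset.mem_filter.mp hr).1).1
  rw [h]
  apply Finset.sum_congr rfl
  intro a _
  have : (PP F).filter (fun r => (r.1.1, r.1.2.1) = a) = (fibA F a) ×ˢ (fibA F a) := by
    ext ⟨p, q⟩
    simp only [PP, fibA, Finset.mem_filter, Finset.mem_product, Prod.ext_iff]
    constructor
    · rintro ⟨⟨⟨hp, hq⟩, h1, h2⟩, h3, h4⟩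
      exact ⟨⟨hp, h3, h4⟩, hq, by omega, by omega⟩
    · rintro ⟨⟨hp, h3, h4⟩, hq, h5, h6⟩
      exact ⟨⟨⟨hp, hq⟩, by omega, by omega⟩, h3, h4⟩
  rw [this, Finset.card_product, sq]

lemma psi_injOn (F : Finset P3) : Set.InjOn Psi ↑(PP F) := by
  rintro ⟨⟨x1,y1,z1⟩,⟨x2,y2,z2⟩⟩ hr ⟨⟨a1,b1,c1⟩,⟨a2,b2,c2⟩⟩ hs h
  simp only [Finset.coe_filter, PP, Set.mem_setOf_eq, Finset.mem_product] at hr hs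
  simp only [Psi, Prod.ext_iff] at h ⊢
  obtain ⟨⟨h1,h2⟩,h3,h4⟩ := h
  refine ⟨⟨h1, ?_, h2⟩, ?_, h3, h4⟩ <;> omega

lemma psi_maps (F : Finset P3) : ∀ r ∈ PP F, Psi r ∈ (prB F) ×ˢ (prC F) := by
  intro r hr
  simp only [PP, Finset.mem_filter, Finset.mem_product] at hr
  simp only [Psi, Finset.mem_product, prB, prC]
  exact ⟨Finset.mem_image_of_mem _ hr.1.1, Finset.mem_image_of_mem _ hr.1.2⟩

lemma lw_inj (F : Finset P3) :
    ∑ a ∈ prA F, (fibA F a).card ^ 2 ≤ (prB F).card * (prC F).card := by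
  rw [← pp_card, ← Finset.card_product]
  exact Finset.card_le_card_of_injOn Psi (psi_maps F) (psi_injOn F)

lemma lw_surj (F : Finset P3)
    (heq : ∑ a ∈ prA F, (fibA F a).card ^ 2 = (prB F).card * (prC F).card) :
    ∀ p : P3, (p.1, p.2.2) ∈ prB F → p.2.1 ∈ (prC F).image Prod.fst → p ∈ F := by
  have himg : (PP F).image Psi = (prB F) ×ˢ (prC F) := by
    apply Finset.eq_of_subset_of_card_le
    · intro s hs
      obtain ⟨r, hr, rfl⟩ := Finset.mem_image.mp hs
      exact psi_maps F r hr
    · rw [Finset.card_image_of_injOn (psi_injOn F), pp_card, heq, Finset.card_product]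
  rintro ⟨x, y, z⟩ hB hY
  simp only [Finset.mem_image] at hY
  obtain ⟨⟨y', z'⟩, hyz', hy⟩ := hY
  simp only at hy
  have hmem : ((x, z), (y', z')) ∈ (prB F) ×ˢ (prC F) := Finset.mem_product.mpr ⟨hB, hyz'⟩
  rw [← himg] at hmem
  obtain ⟨⟨⟨x1,y1,z1⟩,⟨x2,y2,z2⟩⟩, hr, hPsi⟩ := Finset.mem_image.mp hmem
  simp only [PP, Finset.mem_filter, Finset.mem_product] at hr
  simp only [Psi, Prod.ext_iff] at hPsi
  obtain ⟨⟨hx1, hz1⟩, hy2, hz2⟩ := hPsi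
  have : (x1, y1, z1) = (x, y, z) := by
    simp only [Prod.ext_iff]
    obtain ⟨⟨_, _⟩, he1, he2⟩ := hr
    refine ⟨hx1, ?_, hz1⟩
    omega
  rw [← this]
  exact hr.1.1



-- 27abc ≤ (a+b+c)^3 for nonneg ints
lemma amgm3 (a b c : ℤ) (ha : 0 ≤ a) (hb : 0 ≤ b) (hc : 0 ≤ c) :
    27 * (a * b * c) ≤ (a + b + c)^3 := by
  nlinarith [sq_nonneg (a-b), sq_nonneg (b-c), sq_nonneg (a-c), mul_nonneg ha hb,
    mul_nonneg hb hc, mul_nonneg ha hc, sq_nonneg (a+b-2*c), sq_nonneg (b+c-2*a),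
    sq_nonneg (a+c-2*b)]

lemma amgm_last (a b c m : ℤ) (ha : 0 ≤ a) (hb : 0 ≤ b) (hc : 0 ≤ c) (hm : 1 ≤ m)
    (hsum : a + b + c = 3*m) (hprod : m^3 ≤ a*b*c) : c = m := by
  have hab : 3*m - c = a + b := by omega
  have h1 : 4*m^3 ≤ c*(3*m-c)^2 := by
    rw [hab]
    nlinarith [mul_nonneg hc (sq_nonneg (a-b)), hprod]
  have h2 : (c-m)^2*(4*m-c) ≤ 0 := by nlinarith
  have h3 : c ≤ 3*m := by omega
  by_contra hne
  have h0 : c - m ≠ 0 := by omega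
  have h4 : 1 ≤ (c-m)^2 := by
    rcases lt_or_gt_of_ne h0 with h | h
    · nlinarith
    · nlinarith
  nlinarith [h4, h2]

lemma cube_le (s t : ℤ) (hs : 0 ≤ s) (h : t^3 ≤ s^3) (ht : 0 ≤ t) : t ≤ s := by
  by_contra hlt
  push_neg at hlt
  have h1 : 0 < t := lt_of_le_of_lt hs hlt
  have h2 : 0 < t - s := by omega
  have h3 : (0:ℤ) < t^2 + t*s + s^2 := by
    nlinarith [mul_pos h1 h1, mul_nonneg h1.le hs, mul_nonneg hs hs]
  nlinarith [mul_pos h2 h3]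

lemma amgm_eq (a b c m : ℕ) (hsum : a + b + c ≤ 3*m) (hprod : m^3 ≤ a*b*c) :
    a = m ∧ b = m ∧ c = m ∧ a*b*c = m^3 := by
  rcases Nat.eq_zero_or_pos m with rfl | hm
  · simp at hsum ⊢; omega
  · have ha : (0:ℤ) ≤ a := Int.ofNat_nonneg a
    have hb : (0:ℤ) ≤ b := Int.ofNat_nonneg b
    have hc : (0:ℤ) ≤ c := Int.ofNat_nonneg c
    have hm' : (1:ℤ) ≤ m := by exact_mod_cast hm
    have hprod' : (m:ℤ)^3 ≤ a*b*c := by exact_mod_cast hprod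
    have hsum' : (a:ℤ) + b + c ≤ 3*m := by exact_mod_cast hsum
    have hge : 3*(m:ℤ) ≤ a + b + c := by
      have h27 := amgm3 a b c ha hb hc
      have : (3*(m:ℤ))^3 ≤ (a+b+c)^3 := by nlinarith
      have := cube_le (a+b+c) (3*m) (by positivity) this (by positivity)
      linarith
    have hsumeq : (a:ℤ) + b + c = 3*m := le_antisymm hsum' hge
    have hceq : (c:ℤ) = m := amgm_last a b c m ha hb hc hm' hsumeq hprod'
    have haeq : (a:ℤ) = m := amgm_last c b a m hc hb ha hm' (by linarith) (by nlinarith)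
    have hbeq : (b:ℤ) = m := by omega
    have h1 : a = m := by exact_mod_cast haeq
    have h2 : b = m := by exact_mod_cast hbeq
    have h3 : c = m := by exact_mod_cast hceq
    subst h1; subst h2; subst h3
    exact ⟨rfl, rfl, rfl, by ring⟩


noncomputable def cubeF (n : ℕ) : Finset P3 :=
  Finset.Ico (0:ℤ) n ×ˢ Finset.Ico (0:ℤ) n ×ˢ Finset.Ico (0:ℤ) n

lemma cube_coe (n : ℕ) : cube n = ↑(cubeF n) := by
  ext ⟨x, y, z⟩
  simp [cube, cubeF, Finset.mem_Ico]
  tauto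

lemma dd_cube (n : ℕ) :
    (Dd ev1 (cubeF n)).card = (n-1) * (n * n) ∧
    (Dd ev2 (cubeF n)).card = n * ((n-1) * n) ∧
    (Dd ev3 (cubeF n)).card = n * (n * (n-1)) := by
  have h1 : Dd ev1 (cubeF n) = Finset.Ico (0:ℤ) ((n:ℤ)-1) ×ˢ Finset.Ico (0:ℤ) n ×ˢ Finset.Ico (0:ℤ) n := by
    ext ⟨x, y, z⟩
    simp [Dd, cubeF, Finset.mem_Ico]
    omega
  have h2 : Dd ev2 (cubeF n) = Finset.Ico (0:ℤ) n ×ˢ Finset.Ico (0:ℤ) ((n:ℤ)-1) ×ˢ Finset.Ico (0:ℤ) n := by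
    ext ⟨x, y, z⟩
    simp [Dd, cubeF, Finset.mem_Ico]
    omega
  have h3 : Dd ev3 (cubeF n) = Finset.Ico (0:ℤ) n ×ˢ Finset.Ico (0:ℤ) n ×ˢ Finset.Ico (0:ℤ) ((n:ℤ)-1) := by
    ext ⟨x, y, z⟩
    simp [Dd, cubeF, Finset.mem_Ico]
    omega
  have hc : ((n:ℤ) - 0).toNat = n := by omega
  have hc' : ((n:ℤ) - 1 - 0).toNat = n - 1 := by omega
  refine ⟨?_, ?_, ?_⟩ <;>
    simp [h1, h2, h3, Finset.card_product, Int.card_Ico, hc, hc']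

lemma cube_card (n : ℕ) : (cubeF n).card = n^3 := by
  have hc : ((n:ℤ) - 0).toNat = n := by omega
  simp [cubeF, Finset.card_product, Int.card_Ico, hc]
  ring

lemma dd_cube_total (n : ℕ) :
    (Dd ev1 (cubeF n)).card + (Dd ev2 (cubeF n)).card + (Dd ev3 (cubeF n)).card
      = 3 * n^2 * (n-1) := by
  obtain ⟨e1, e2, e3⟩ := dd_cube n
  rw [e1, e2, e3]
  rcases n with _ | m
  · simp
  · simp only [Nat.add_sub_cancel]
    ring


-- column instances

lemma col1 (F : Finset P3) : (Dd ev1 F).card + (prC F).card ≤ F.card :=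
  col_card_le F ev1 (fun p => p.1) (fun p => p.2) (fun x u => (x, u))
    (fun _ _ => rfl) (fun _ _ => rfl) (fun _ => rfl)
    (fun x u => by obtain ⟨y,z⟩ := u; simp [Prod.ext_iff])

lemma col2 (F : Finset P3) : (Dd ev2 F).card + (prB F).card ≤ F.card :=
  col_card_le F ev2 (fun p => p.2.1) (fun p => (p.1, p.2.2)) (fun x u => (u.1, x, u.2))
    (fun _ _ => rfl) (fun _ _ => rfl) (fun _ => rfl)
    (fun x u => by obtain ⟨y,z⟩ := u; simp [Prod.ext_iff])

lemma col3 (F : Finset P3) : (Dd ev3 F).card + (prA F).card ≤ F.card :=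
  col_card_le F ev3 (fun p => p.2.2) (fun p => (p.1, p.2.1)) (fun x u => (u.1, u.2, x))
    (fun _ _ => rfl) (fun _ _ => rfl) (fun _ => rfl)
    (fun x u => by obtain ⟨y,z⟩ := u; simp [Prod.ext_iff])

lemma col1_int (F : Finset P3) (heq : (Dd ev1 F).card + (prC F).card = F.card)
    (u : ℤ × ℤ) (hu : u ∈ prC F) :
    ∃ a b : ℤ, ∀ x : ℤ, (x, u.1, u.2) ∈ F ↔ x ∈ Finset.Icc a b := by
  have h := col_interval F ev1 (fun p => p.1) (fun p => p.2) (fun x u => (x, u))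
    (fun _ _ => rfl) (fun _ _ => rfl) (fun _ => rfl)
    (fun x u => by obtain ⟨y,z⟩ := u; simp [Prod.ext_iff]) heq u hu
  obtain ⟨a, b, hab⟩ := h
  exact ⟨a, b, fun x => by simpa using hab x⟩

lemma col2_int (F : Finset P3) (heq : (Dd ev2 F).card + (prB F).card = F.card)
    (u : ℤ × ℤ) (hu : u ∈ prB F) :
    ∃ a b : ℤ, ∀ x : ℤ, (u.1, x, u.2) ∈ F ↔ x ∈ Finset.Icc a b := by
  have h := col_interval F ev2 (fun p => p.2.1) (fun p => (p.1, p.2.2)) (fun x u => (u.1, x, u.2))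
    (fun _ _ => rfl) (fun _ _ => rfl) (fun _ => rfl)
    (fun x u => by obtain ⟨y,z⟩ := u; simp [Prod.ext_iff]) heq u hu
  obtain ⟨a, b, hab⟩ := h
  exact ⟨a, b, fun x => by simpa using hab x⟩

lemma col3_int (F : Finset P3) (heq : (Dd ev3 F).card + (prA F).card = F.card)
    (u : ℤ × ℤ) (hu : u ∈ prA F) :
    ∃ a b : ℤ, ∀ x : ℤ, (u.1, u.2, x) ∈ F ↔ x ∈ Finset.Icc a b := by
  have h := col_interval F ev3 (fun p => p.2.2) (fun p => (p.1, p.2.1)) (fun x u => (u.1, u.2, x))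
    (fun _ _ => rfl) (fun _ _ => rfl) (fun _ => rfl)
    (fun x u => by obtain ⟨y,z⟩ := u; simp [Prod.ext_iff]) heq u hu
  obtain ⟨a, b, hab⟩ := h
  exact ⟨a, b, fun x => by simpa using hab x⟩

theorem main_struct (n : ℕ) (hn : 1 ≤ n) (F : Finset P3) (hcard : F.card = n^3)
    (hedges : 3*n^2*(n-1) ≤ (Dd ev1 F).card + (Dd ev2 F).card + (Dd ev3 F).card) :
    ∃ v : P3, (F : Set P3) = (fun p => p + v) '' cube n := by
  classical
  set E1 := (Dd ev1 F).card
  set E2 := (Dd ev2 F).card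
  set E3 := (Dd ev3 F).card
  set a := (prA F).card with ha_def
  set b := (prB F).card with hb_def
  set cc := (prC F).card with hc_def
  have hid : 3*n^2*(n-1) + 3*n^2 = 3*n^3 := by
    rcases n with _ | m
    · omega
    · simp only [Nat.add_sub_cancel]; ring
  have h1 := col1 F
  have h2 := col2 F
  have h3 := col3 F
  rw [hcard] at h1 h2 h3
  have hkey : a + b + cc ≤ 3*n^2 := by linarith
  -- AM-GM upper bound on product
  have hamgm : 27*(a*b*cc) ≤ (a+b+cc)^3 := by
    have := amgm3 a b cc (Int.ofNat_nonneg a) (Int.ofNat_nonneg b) (Int.ofNat_nonneg cc)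
    exact_mod_cast this
  have hup : (a+b+cc)^3 ≤ 27*(n^2)^3 := by
    calc (a+b+cc)^3 ≤ (3*n^2)^3 := Nat.pow_le_pow_left hkey 3
    _ = 27*(n^2)^3 := by ring
  have habc_le : a*b*cc ≤ (n^2)^3 := by linarith
  -- LW lower bound
  have hcs := lw_cs F
  have hinj := lw_inj F
  rw [hcard] at hcs
  have hNP : (n^3)^2 = (n^2)^3 := by ring
  have hchain : a * ∑ s ∈ prA F, (fibA F s).card ^ 2 ≤ a * (b * cc) :=
    Nat.mul_le_mul_left a hinj
  have habc_ge : (n^2)^3 ≤ a*b*cc := by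
    calc (n^2)^3 = (n^3)^2 := by ring
    _ ≤ a * ∑ s ∈ prA F, (fibA F s).card ^ 2 := hcs
    _ ≤ a * (b * cc) := hchain
    _ = a*b*cc := by ring
  obtain ⟨haP, hbP, hcP, hprodP⟩ := amgm_eq a b cc (n^2) hkey habc_ge
  have hapos : 0 < a := by rw [haP]; positivity
  have hfib_eq : ∑ s ∈ prA F, (fibA F s).card ^ 2 = b * cc := by
    have hle : a * ∑ s ∈ prA F, (fibA F s).card ^ 2 ≤ a * (b*cc) := hchain
    have hge : a * (b*cc) ≤ a * ∑ s ∈ prA F, (fibA F s).card ^ 2 := by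
      calc a * (b*cc) = a*b*cc := by ring
      _ = (n^2)^3 := hprodP
      _ = (n^3)^2 := by ring
      _ ≤ _ := hcs
    exact Nat.eq_of_mul_eq_mul_left hapos (le_antisymm hle hge)
  -- each direction equality
  have hE1 : E1 + cc = n^3 := by
    apply le_antisymm h1
    have := hid
    linarith [h2, h3, hedges, hbP, hcP, haP]
  have hE2 : E2 + b = n^3 := by
    apply le_antisymm h2
    linarith [h1, h3, hedges, hbP, hcP, haP, hid]
  have hE3 : E3 + a = n^3 := by
    apply le_antisymm h3
    linarith [h1, h2, hedges, hbP, hcP, haP, hid]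
  -- surjectivity: product structure
  set Y := (prC F).image Prod.fst with hY_def
  have hsurj := lw_surj F hfib_eq
  have hchar : ∀ p : P3, p ∈ F ↔ ((p.1, p.2.2) ∈ prB F ∧ p.2.1 ∈ Y) := by
    intro p
    constructor
    · intro hp
      refine ⟨Finset.mem_image_of_mem _ hp, ?_⟩
      exact Finset.mem_image_of_mem Prod.fst (Finset.mem_image_of_mem _ hp)
    · rintro ⟨hB, hY⟩
      exact hsurj p hB hY
  -- card F = b * |Y|
  have hcardBY : F.card = (prB F ×ˢ Y).card := by
    apply Finset.card_bij (fun p _ => ((p.1, p.2.2), p.2.1))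
    · intro p hp
      rw [Finset.mem_product]
      exact ⟨((hchar p).mp hp).1, ((hchar p).mp hp).2⟩
    · rintro ⟨x1,y1,z1⟩ h1' ⟨x2,y2,z2⟩ h2' heq'
      simp only [Prod.ext_iff] at heq' ⊢
      tauto
    · rintro ⟨⟨x, z⟩, y⟩ hm
      rw [Finset.mem_product] at hm
      exact ⟨(x, y, z), (hchar (x,y,z)).mpr ⟨hm.1, hm.2⟩, rfl⟩
  have hYcard : Y.card = n := by
    rw [Finset.card_product, ← hb_def, hbP] at hcardBY
    rw [hcard] at hcardBY
    have : n^3 = n^2 * n := by ring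
    rw [this] at hcardBY
    exact (Nat.eq_of_mul_eq_mul_left (by positivity) hcardBY).symm
  set X := (prB F).image Prod.fst with hX_def
  set Z := (prB F).image Prod.snd with hZ_def
  -- prA = X ×ˢ Y
  have hprA : prA F = X ×ˢ Y := by
    ext ⟨x, y⟩
    rw [Finset.mem_product]
    constructor
    · intro hm
      obtain ⟨p, hp, hpe⟩ := Finset.mem_image.mp hm
      have h := (hchar p).mp hp
      simp only [Prod.ext_iff] at hpe
      constructor
      · rw [hX_def]
        apply Finset.mem_image.mpr
        exact ⟨(p.1, p.2.2), h.1, by simp [hpe.1]⟩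
      · rw [← hpe.2]; exact h.2
    · rintro ⟨hx, hy⟩
      obtain ⟨⟨x', z⟩, hxz, hxe⟩ := Finset.mem_image.mp hx
      simp only at hxe
      rw [hxe] at hxz
      have : (x, y, z) ∈ F := (hchar (x,y,z)).mpr ⟨hxz, hy⟩
      exact Finset.mem_image.mpr ⟨(x,y,z), this, rfl⟩
  have hXcard : X.card = n := by
    have : a = X.card * Y.card := by rw [ha_def, hprA, Finset.card_product]
    rw [haP, hYcard] at this
    have h2 : n^2 = n * n := by ring
    rw [h2] at this
    exact (Nat.eq_of_mul_eq_mul_right (by omega) this.symm)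
  -- prC = Y ×ˢ Z
  have hprC : prC F = Y ×ˢ Z := by
    ext ⟨y, z⟩
    rw [Finset.mem_product]
    constructor
    · intro hm
      obtain ⟨p, hp, hpe⟩ := Finset.mem_image.mp hm
      have h := (hchar p).mp hp
      simp only [Prod.ext_iff] at hpe
      constructor
      · rw [← hpe.1]; exact h.2
      · rw [hZ_def]
        apply Finset.mem_image.mpr
        exact ⟨(p.1, p.2.2), h.1, by simp [hpe.2]⟩
    · rintro ⟨hy, hz⟩
      obtain ⟨⟨x, z'⟩, hxz, hze⟩ := Finset.mem_image.mp hz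
      simp only at hze
      rw [hze] at hxz
      have : (x, y, z) ∈ F := (hchar (x,y,z)).mpr ⟨hxz, hy⟩
      exact Finset.mem_image.mpr ⟨(x,y,z), this, rfl⟩
  have hZcard : Z.card = n := by
    have : cc = Y.card * Z.card := by rw [hc_def, hprC, Finset.card_product]
    rw [hcP, hYcard] at this
    have h2 : n^2 = n * n := by ring
    rw [h2] at this
    exact (Nat.eq_of_mul_eq_mul_left (by omega) this.symm)
  -- prB = X ×ˢ Z
  have hprB : prB F = X ×ˢ Z := by
    apply Finset.eq_of_subset_of_card_le
    · intro ⟨x, z⟩ hm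
      rw [Finset.mem_product]
      exact ⟨Finset.mem_image_of_mem _ hm, Finset.mem_image_of_mem _ hm⟩
    · rw [Finset.card_product, hXcard, hZcard, ← hb_def, hbP]
      nlinarith
  -- final membership characterization
  have hfinal : ∀ p : P3, p ∈ F ↔ (p.1 ∈ X ∧ p.2.1 ∈ Y ∧ p.2.2 ∈ Z) := by
    intro p
    rw [hchar p, hprB, Finset.mem_product]
    tauto
  -- nonemptiness
  have hXne : X.Nonempty := Finset.card_pos.mp (by omega)
  have hYne : Y.Nonempty := Finset.card_pos.mp (by omega)
  have hZne : Z.Nonempty := Finset.card_pos.mp (by omega)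
  obtain ⟨x0, hx0⟩ := hXne
  obtain ⟨y0, hy0⟩ := hYne
  obtain ⟨z0, hz0⟩ := hZne
  -- intervals
  have hXint : ∃ α : ℤ, ∀ x : ℤ, x ∈ X ↔ (α ≤ x ∧ x < α + n) := by
    have heq1 : (Dd ev1 F).card + (prC F).card = F.card := by rw [hcard]; exact hE1
    obtain ⟨α, β, hαβ⟩ := col1_int F heq1 (y0, z0)
      (by rw [hprC, Finset.mem_product]; exact ⟨hy0, hz0⟩)
    have hXeq : X = Finset.Icc α β := by
      ext x
      rw [← hαβ x]
      constructor
      · intro hx; exact (hfinal (x, y0, z0)).mpr ⟨hx, hy0, hz0⟩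
      · intro hx; exact ((hfinal (x, y0, z0)).mp hx).1
    have hcardIcc : (Finset.Icc α β).card = n := by rw [← hXeq, hXcard]
    rw [Int.card_Icc] at hcardIcc
    refine ⟨α, fun x => ?_⟩
    rw [hXeq, Finset.mem_Icc]
    omega
  have hYint : ∃ γ : ℤ, ∀ y : ℤ, y ∈ Y ↔ (γ ≤ y ∧ y < γ + n) := by
    have heq2 : (Dd ev2 F).card + (prB F).card = F.card := by rw [hcard]; exact hE2
    obtain ⟨γ, δ, hγδ⟩ := col2_int F heq2 (x0, z0)
      (by rw [hprB, Finset.mem_product]; exact ⟨hx0, hz0⟩)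
    have hYeq : Y = Finset.Icc γ δ := by
      ext y
      rw [← hγδ y]
      constructor
      · intro hy; exact (hfinal (x0, y, z0)).mpr ⟨hx0, hy, hz0⟩
      · intro hy; exact ((hfinal (x0, y, z0)).mp hy).2.1
    have hcardIcc : (Finset.Icc γ δ).card = n := by rw [← hYeq, hYcard]
    rw [Int.card_Icc] at hcardIcc
    refine ⟨γ, fun y => ?_⟩
    rw [hYeq, Finset.mem_Icc]
    omega
  have hZint : ∃ ε : ℤ, ∀ z : ℤ, z ∈ Z ↔ (ε ≤ z ∧ z < ε + n) := by
    have heq3 : (Dd ev3 F).card + (prA F).card = F.card := by rw [hcard]; exact hE3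
    obtain ⟨ε, ζ, hεζ⟩ := col3_int F heq3 (x0, y0)
      (by rw [hprA, Finset.mem_product]; exact ⟨hx0, hy0⟩)
    have hZeq : Z = Finset.Icc ε ζ := by
      ext z
      rw [← hεζ z]
      constructor
      · intro hz; exact (hfinal (x0, y0, z)).mpr ⟨hx0, hy0, hz⟩
      · intro hz; exact ((hfinal (x0, y0, z)).mp hz).2.2
    have hcardIcc : (Finset.Icc ε ζ).card = n := by rw [← hZeq, hZcard]
    rw [Int.card_Icc] at hcardIcc
    refine ⟨ε, fun z => ?_⟩
    rw [hZeq, Finset.mem_Icc]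
    omega
  obtain ⟨α, hα⟩ := hXint
  obtain ⟨γ, hγ⟩ := hYint
  obtain ⟨ε, hε⟩ := hZint
  refine ⟨(α, γ, ε), ?_⟩
  ext ⟨x, y, z⟩
  simp only [Finset.mem_coe, Set.mem_image]
  rw [hfinal (x,y,z)]
  simp only [hα, hγ, hε]
  constructor
  · rintro ⟨⟨hx1, hx2⟩, ⟨hy1, hy2⟩, hz1, hz2⟩
    refine ⟨(x - α, y - γ, z - ε), ?_, ?_⟩
    · simp only [cube, Set.mem_setOf_eq]
      refine ⟨by omega, by omega, by omega, by omega, by omega, by omega⟩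
    · simp only [Prod.mk_add_mk, Prod.mk.injEq]
      refine ⟨by omega, by omega, by omega⟩
  · rintro ⟨⟨px, py, pz⟩, hp, hpe⟩
    simp only [cube, Set.mem_setOf_eq] at hp
    simp only [Prod.mk_add_mk, Prod.ext_iff] at hpe
    obtain ⟨he1, he2, he3⟩ := hpe
    refine ⟨⟨by omega, by omega⟩, ⟨by omega, by omega⟩, by omega, by omega⟩


/-- Berger–Leighton: among all sets of cardinality `n³` in `ℤ³`, the `n`-cube (uniquely, up
to translation) maximizes the number of internal edges, which equals `3n²(n−1)`. -/
theorem stmt13 (n : ℕ) :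
    intEdges3 (cube n) = 3 * n ^ 2 * (n - 1) ∧
      ∀ S : Set (ℤ × ℤ × ℤ), S.Finite → S.ncard = n ^ 3 →
        (∀ v : ℤ × ℤ × ℤ, S ≠ (fun p => p + v) '' cube n) →
        intEdges3 S < 3 * n ^ 2 * (n - 1) := by
  constructor
  · rw [cube_coe n, edges_decomp (cubeF n), dd_cube_total n]
  · intro S hfin hncard hne
    by_contra hcon
    push_neg at hcon
    set F := hfin.toFinset with hF
    have hFS : (F : Set (ℤ × ℤ × ℤ)) = S := hfin.coe_toFinset
    have hFcard : F.card = n ^ 3 := by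
      rw [← Set.ncard_coe_finset, hFS]; exact hncard
    rcases Nat.eq_zero_or_pos n with rfl | hn
    · have hS : S = ∅ := by
        rw [← Set.ncard_eq_zero hfin]
        simpa using hncard
      apply hne 0
      have hc0 : cube 0 = ∅ := by
        ext ⟨x, y, z⟩
        simp only [cube, Set.mem_setOf_eq, Set.mem_empty_iff_false, iff_false, not_and]
        intro h1 h2
        omega
      rw [hS, hc0]
      simp
    · have hedges : 3 * n ^ 2 * (n - 1) ≤
          (Dd ev1 F).card + (Dd ev2 F).card + (Dd ev3 F).card := by
        have hdec : intEdges3 S = (Dd ev1 F).card + (Dd ev2 F).card + (Dd ev3 F).card := by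
          rw [← hFS, edges_decomp]
        rw [hdec] at hcon
        exact hcon
      obtain ⟨v, hv⟩ := main_struct n hn F hFcard hedges
      exact hne v (by rw [← hFS, hv])
end

section
/- Let Σ = {0,1,2} with hydrophobicity h_c(1)=0, h_c(0)=1, h_c(2)=c and c ≥ 10. Suppose an embedding ψ of the multiset M = {(01)^4, (01)^4, (01)^4, 2^3 1^9} (closed chains in ℤ³) has at most 12−x c-contributions for some x ≥ 1, while the intended embedding φ has 12 c-contributions and 8 one-contributions (total score 12(c+1) + 16). If x ≤ 4 then the score of ψ is at most (12−x)(c+1) + (4−x)·6 + x·8, and this quantity is strictly less than 12(c+1)+16. -/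
/-- L¹ distance on ℤ³. -/
def d3 (p q : ℤ × ℤ × ℤ) : ℕ :=
  (p.1 - q.1).natAbs + (p.2.1 - q.2.1).natAbs + (p.2.2 - q.2.2).natAbs

/-- Index set for the multiset `M = {(01)^4, (01)^4, (01)^4, 2^3 1^9}`: three closed
chains of length 8 and one closed chain of length 12. -/
abbrev MIdx : Type := (Fin 3 × ZMod 8) ⊕ ZMod 12

/-- The labels over the alphabet `{0,1,2}` (as `Fin 3`): each 8-chain carries `(01)^4`
and the 12-chain carries `2^3 1^9`. -/
def mLabel : MIdx → Fin 3
  | .inl (_, i) => if i.val % 2 = 0 then 0 else 1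
  | .inr i => if i.val < 3 then 2 else 1

/-- The cyclic successor of a position within its chain. -/
def mNext : MIdx → MIdx
  | .inl (c, i) => .inl (c, i + 1)
  | .inr i => .inr (i + 1)

/-- A closed-chain embedding of the multiset `M` into ℤ³: an injective placement in which
consecutive positions of each (cyclic) chain are at L¹ distance 1. -/
def IsMEmbedding (F : MIdx → ℤ × ℤ × ℤ) : Prop :=
  Function.Injective F ∧ ∀ p : MIdx, d3 (F p) (F (mNext p)) = 1

/-- Hydrophobicity levels: `h_c(0) = 1`, `h_c(1) = 0`, `h_c(2) = c`. -/
def hlev (c : ℕ) : Fin 3 → ℕ := ![1, 0, c]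

/-- The contribution of an ordered pair of positions: `h(a) + h(b)` if they form a contact
(lattice-adjacent, not chain-consecutive, both of nonzero level), else 0. -/
def mContrib (c : ℕ) (F : MIdx → ℤ × ℤ × ℤ) (p q : MIdx) : ℕ :=
  if d3 (F p) (F q) = 1 ∧ q ≠ mNext p ∧ p ≠ mNext q ∧
      hlev c (mLabel p) ≠ 0 ∧ hlev c (mLabel q) ≠ 0
  then hlev c (mLabel p) + hlev c (mLabel q) else 0

/-- The total score of an embedding: the sum of the contributions of all (unordered)
contacts. -/
def mScore (c : ℕ) (F : MIdx → ℤ × ℤ × ℤ) : ℕ :=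
  (∑ p : MIdx × MIdx, mContrib c F p.1 p.2) / 2

/-- The number of `c`-contributions: contacts between a position labeled 2 and a position
labeled 0. -/
noncomputable def mCContribs (F : MIdx → ℤ × ℤ × ℤ) : ℕ :=
  Set.ncard {e : Sym2 MIdx | ∃ p q : MIdx, e = Sym2.mk p q ∧
    d3 (F p) (F q) = 1 ∧ q ≠ mNext p ∧ p ≠ mNext q ∧
    ((mLabel p = 2 ∧ mLabel q = 0) ∨ (mLabel p = 0 ∧ mLabel q = 2))}

namespace HP17

/-! Auxiliary development. -/

lemma d3_comm (v w : ℤ × ℤ × ℤ) : d3 v w = d3 w v := by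
  unfold d3; omega

/-- Parity of a lattice point. -/
def par (v : ℤ × ℤ × ℤ) : ZMod 2 := ((v.1 + v.2.1 + v.2.2 : ℤ) : ZMod 2)

lemma par_ne {v w : ℤ × ℤ × ℤ} (h : d3 v w = 1) : par v ≠ par w := by
  obtain ⟨v1, v2, v3⟩ := v; obtain ⟨w1, w2, w3⟩ := w
  intro heq
  have h2 : v1 + v2 + v3 ≡ w1 + w2 + w3 [ZMOD (2:ℕ)] :=
    (ZMod.intCast_eq_intCast_iff _ _ _).mp heq
  have hd := h2.dvd
  simp only [d3] at h
  have hd2 : (2:ℤ) ∣ w1 + w2 + w3 - (v1 + v2 + v3) := by exact_mod_cast hd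
  omega

lemma z2_resolve {x y : ZMod 2} (h : x ≠ y) : x = y + 1 := by revert h; revert x y; decide

/-- Contact relation (lattice-adjacent, not chain-consecutive). -/
def Ct (F : MIdx → ℤ × ℤ × ℤ) (p q : MIdx) : Prop :=
  d3 (F p) (F q) = 1 ∧ q ≠ mNext p ∧ p ≠ mNext q

instance (F : MIdx → ℤ × ℤ × ℤ) (p q : MIdx) : Decidable (Ct F p q) := by
  unfold Ct; infer_instance

lemma Ct_symm {F : MIdx → ℤ × ℤ × ℤ} {p q : MIdx} (h : Ct F p q) : Ct F q p :=
  ⟨by rw [d3_comm]; exact h.1, h.2.2, h.2.1⟩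

/-- Cyclic predecessor. -/
def mPrev : MIdx → MIdx
  | .inl (k, i) => .inl (k, i - 1)
  | .inr i => .inr (i - 1)

lemma mNext_mPrev (p : MIdx) : mNext (mPrev p) = p := by
  rcases p with ⟨k, i⟩ | i <;> simp [mNext, mPrev]

lemma mNext_ne_mPrev (p : MIdx) : mNext p ≠ mPrev p := by
  rcases p with ⟨k, i⟩ | i <;>
    simp only [mNext, mPrev, ne_eq, Sum.inl.injEq, Sum.inr.injEq, Prod.mk.injEq, true_and] <;>
    intro h
  · have h2 : (2 : ZMod 8) = 0 := by linear_combination h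
    exact absurd h2 (by decide)
  · have h2 : (2 : ZMod 12) = 0 := by linear_combination h
    exact absurd h2 (by decide)

/-- The six unit directions. -/
def dirs : Fin 6 → ℤ × ℤ × ℤ := ![(1,0,0), (-1,0,0), (0,1,0), (0,-1,0), (0,0,1), (0,0,-1)]

/-- The six lattice neighbours of a point. -/
def nbr (v : ℤ × ℤ × ℤ) : Finset (ℤ × ℤ × ℤ) :=
  Finset.univ.image (fun i : Fin 6 => v + dirs i)

lemma nbr_card (v : ℤ × ℤ × ℤ) : (nbr v).card ≤ 6 :=
  le_trans Finset.card_image_le (by simp)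

lemma mem_nbr {w v : ℤ × ℤ × ℤ} (h : d3 w v = 1) : w ∈ nbr v := by
  obtain ⟨v1, v2, v3⟩ := v; obtain ⟨w1, w2, w3⟩ := w
  simp only [d3] at h
  simp only [nbr, Finset.mem_image, Finset.mem_univ, true_and]
  by_cases e1 : w1 = v1
  · by_cases e2 : w2 = v2
    · have hd : w3 = v3 + 1 ∨ w3 = v3 - 1 := by omega
      rcases hd with h3 | h3
      · exact ⟨4, by rw [show dirs 4 = (0,0,1) from rfl]; simp [Prod.ext_iff]; omega⟩
      · exact ⟨5, by rw [show dirs 5 = (0,0,-1) from rfl]; simp [Prod.ext_iff]; omega⟩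
    · have h3 : w3 = v3 := by omega
      have hd : w2 = v2 + 1 ∨ w2 = v2 - 1 := by omega
      rcases hd with h2 | h2
      · exact ⟨2, by rw [show dirs 2 = (0,1,0) from rfl]; simp [Prod.ext_iff]; omega⟩
      · exact ⟨3, by rw [show dirs 3 = (0,-1,0) from rfl]; simp [Prod.ext_iff]; omega⟩
  · have h2 : w2 = v2 := by omega
    have h3 : w3 = v3 := by omega
    have hd : w1 = v1 + 1 ∨ w1 = v1 - 1 := by omega
    rcases hd with h1 | h1
    · exact ⟨0, by rw [show dirs 0 = (1,0,0) from rfl]; simp [Prod.ext_iff]; omega⟩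
    · exact ⟨1, by rw [show dirs 1 = (-1,0,0) from rfl]; simp [Prod.ext_iff]; omega⟩

variable {F : MIdx → ℤ × ℤ × ℤ}

lemma deg_snd (hF : IsMEmbedding F) (q : MIdx) :
    (Finset.univ.filter (fun p => Ct F p q)).card ≤ 4 := by
  set S := Finset.univ.filter (fun p => Ct F p q) with hS
  have hnS : mNext q ∉ S := by
    rw [hS, Finset.mem_filter]
    rintro ⟨-, h⟩
    exact h.2.2 rfl
  have hpS : mPrev q ∉ S := by
    rw [hS, Finset.mem_filter]
    rintro ⟨-, h⟩
    exact h.2.1 (mNext_mPrev q).symm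
  have hne : mNext q ≠ mPrev q := mNext_ne_mPrev q
  have hcard : (insert (mNext q) (insert (mPrev q) S)).card = S.card + 2 := by
    rw [Finset.card_insert_of_notMem (by simp [hnS, hne]),
      Finset.card_insert_of_notMem hpS]
  have hsub : ∀ p ∈ insert (mNext q) (insert (mPrev q) S), F p ∈ nbr (F q) := by
    intro p hp
    rcases Finset.mem_insert.mp hp with rfl | hp
    · exact mem_nbr (by rw [d3_comm]; exact hF.2 q)
    rcases Finset.mem_insert.mp hp with rfl | hp
    · have h2 := hF.2 (mPrev q); rw [mNext_mPrev] at h2; exact mem_nbr h2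
    · exact mem_nbr ((Finset.mem_filter.mp hp).2.1)
  have hinj : Set.InjOn F ↑(insert (mNext q) (insert (mPrev q) S)) :=
    fun a _ b _ h => hF.1 h
  have hle := Finset.card_le_card_of_injOn F hsub hinj
  have h6 := nbr_card (F q)
  omega

lemma deg_fst (hF : IsMEmbedding F) (p : MIdx) :
    (Finset.univ.filter (fun q => Ct F p q)).card ≤ 4 := by
  have heq : Finset.univ.filter (fun q => Ct F p q)
      = Finset.univ.filter (fun q => Ct F q p) := by
    ext q
    simp only [Finset.mem_filter, Finset.mem_univ, true_and]
    exact ⟨Ct_symm, Ct_symm⟩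
  rw [heq]
  exact deg_snd hF p

/-- Parity of the image of a position. -/
def gp (F : MIdx → ℤ × ℤ × ℤ) (p : MIdx) : ZMod 2 := par (F p)

lemma gp_next (hF : IsMEmbedding F) (p : MIdx) : gp F (mNext p) = gp F p + 1 :=
  z2_resolve (Ne.symm (par_ne (hF.2 p)))

lemma gp_inl_nat (hF : IsMEmbedding F) (k : Fin 3) (n : ℕ) :
    gp F (.inl (k, (n : ZMod 8))) = gp F (.inl (k, 0)) + (n : ZMod 2) := by
  induction n with
  | zero => simp
  | succ m ih =>
      have hc : ((m + 1 : ℕ) : ZMod 8) = (m : ZMod 8) + 1 := by push_cast; ring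
      have hnext : (Sum.inl (k, (m : ZMod 8) + 1) : MIdx) = mNext (.inl (k, (m : ZMod 8))) := rfl
      rw [hc, hnext, gp_next hF, ih]
      push_cast
      ring

lemma gp_inl (hF : IsMEmbedding F) (k : Fin 3) (i : ZMod 8) :
    gp F (.inl (k, i)) = gp F (.inl (k, 0)) + ((i.val : ℕ) : ZMod 2) := by
  have h := gp_inl_nat hF k i.val
  rwa [ZMod.natCast_rightInverse i] at h

lemma gp_inr_nat (hF : IsMEmbedding F) (n : ℕ) :
    gp F (.inr (n : ZMod 12)) = gp F (.inr 0) + (n : ZMod 2) := by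
  induction n with
  | zero => simp
  | succ m ih =>
      have hc : ((m + 1 : ℕ) : ZMod 12) = (m : ZMod 12) + 1 := by push_cast; ring
      have hnext : (Sum.inr ((m : ZMod 12) + 1) : MIdx) = mNext (.inr (m : ZMod 12)) := rfl
      rw [hc, hnext, gp_next hF, ih]
      push_cast
      ring

lemma gp_inr_one (hF : IsMEmbedding F) : gp F (.inr 1) = gp F (.inr 0) + 1 := by
  have h := gp_inr_nat hF 1
  have h2 : ((1:ℕ) : ZMod 2) = 1 := by decide
  have h12 : ((1:ℕ) : ZMod 12) = 1 := by decide
  rw [h12, h2] at h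
  exact h

lemma gp_inr_two (hF : IsMEmbedding F) : gp F (.inr 2) = gp F (.inr 0) := by
  have h := gp_inr_nat hF 2
  have h2 : ((2:ℕ) : ZMod 2) = 0 := by decide
  have h12 : ((2:ℕ) : ZMod 12) = 2 := by decide
  rw [h12, h2, add_zero] at h
  exact h

lemma label_zero {p : MIdx} (h : mLabel p = 0) :
    ∃ k i, p = Sum.inl (k, i) ∧ i.val % 2 = 0 := by
  rcases p with ⟨k, i⟩ | i
  · refine ⟨k, i, rfl, ?_⟩
    by_contra hodd
    simp only [mLabel] at h
    rw [if_neg hodd] at h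
    exact absurd h (by decide)
  · simp only [mLabel] at h
    split at h <;> exact absurd h (by decide)

lemma label_two {p : MIdx} (h : mLabel p = 2) :
    p = Sum.inr 0 ∨ p = Sum.inr 1 ∨ p = Sum.inr 2 := by
  rcases p with ⟨k, i⟩ | i
  · simp only [mLabel] at h
    split at h <;> exact absurd h (by decide)
  · simp only [mLabel] at h
    split at h
    case isTrue h3 =>
      have hi : ((i.val : ℕ) : ZMod 12) = i := ZMod.natCast_rightInverse i
      rcases (by omega : i.val = 0 ∨ i.val = 1 ∨ i.val = 2) with h0 | h0 | h0
      · left; rw [← hi, h0]; norm_num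
      · right; left; rw [← hi, h0]; norm_num
      · right; right; rw [← hi, h0]; norm_num
    case isFalse => exact absurd h (by decide)

/-- Ordered contacts with labels (2,0). -/
def P20 (F : MIdx → ℤ × ℤ × ℤ) : Finset (MIdx × MIdx) :=
  Finset.univ.filter (fun e => Ct F e.1 e.2 ∧ mLabel e.1 = 2 ∧ mLabel e.2 = 0)

/-- Ordered contacts with labels (0,2). -/
def P02 (F : MIdx → ℤ × ℤ × ℤ) : Finset (MIdx × MIdx) :=
  Finset.univ.filter (fun e => Ct F e.1 e.2 ∧ mLabel e.1 = 0 ∧ mLabel e.2 = 2)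

/-- Ordered contacts with labels (0,0). -/
def P00 (F : MIdx → ℤ × ℤ × ℤ) : Finset (MIdx × MIdx) :=
  Finset.univ.filter (fun e => Ct F e.1 e.2 ∧ mLabel e.1 = 0 ∧ mLabel e.2 = 0)

lemma card_P02 (F : MIdx → ℤ × ℤ × ℤ) : (P02 F).card = (P20 F).card := by
  apply Finset.card_bij (fun e _ => (e.2, e.1))
  · rintro ⟨p, q⟩ h
    simp only [P02, P20, Finset.mem_filter, Finset.mem_univ, true_and] at h ⊢
    exact ⟨Ct_symm h.1, h.2.2, h.2.1⟩
  · rintro ⟨p, q⟩ h ⟨p', q'⟩ h' heq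
    simp only [Prod.mk.injEq] at heq ⊢
    exact ⟨heq.2, heq.1⟩
  · rintro ⟨p, q⟩ h
    refine ⟨(q, p), ?_, rfl⟩
    simp only [P02, P20, Finset.mem_filter, Finset.mem_univ, true_and] at h ⊢
    exact ⟨Ct_symm h.1, h.2.2, h.2.1⟩

lemma no22 (hF : IsMEmbedding F) :
    ∀ p q : MIdx, ¬(Ct F p q ∧ mLabel p = 2 ∧ mLabel q = 2) := by
  rintro p q ⟨hct, h1, h2⟩
  have hpar : gp F p ≠ gp F q := par_ne hct.1
  rcases label_two h1 with rfl | rfl | rfl <;> rcases label_two h2 with rfl | rfl | rfl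
  · exact hpar rfl
  · exact hct.2.1 (by decide)
  · exact hpar (gp_inr_two hF).symm
  · exact hct.2.2 (by decide)
  · exact hpar rfl
  · exact hct.2.1 (by decide)
  · exact hpar (gp_inr_two hF)
  · exact hct.2.2 (by decide)
  · exact hpar rfl

lemma score_eq (c : ℕ) (hc0 : c ≠ 0) (hF : IsMEmbedding F) :
    mScore c F = (c + 1) * (P20 F).card + (P00 F).card := by
  have t3 : ∀ a : Fin 3, a = 0 ∨ a = 1 ∨ a = 2 := by decide
  have hpt : ∀ e : MIdx × MIdx, mContrib c F e.1 e.2 =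
      (if e ∈ P20 F then c + 1 else 0) + (if e ∈ P02 F then c + 1 else 0) +
      (if e ∈ P00 F then 2 else 0) := by
    intro e
    by_cases hct : Ct F e.1 e.2
    · have hn22 : ¬(mLabel e.1 = 2 ∧ mLabel e.2 = 2) :=
        fun h => no22 hF e.1 e.2 ⟨hct, h.1, h.2⟩
      obtain ⟨h1, h2, h3⟩ := hct
      have hctf : Ct F e.1 e.2 := ⟨h1, h2, h3⟩
      rcases t3 (mLabel e.1) with hA | hA | hA <;> rcases t3 (mLabel e.2) with hB | hB | hB
      pick_goal 9; exact absurd ⟨hA, hB⟩ hn22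
      all_goals
        simp [mContrib, P20, P02, P00, Finset.mem_filter, hctf, h1, h2, h3, hA, hB,
          hlev, hc0] <;> omega
    · have h1 : mContrib c F e.1 e.2 = 0 := by
        unfold mContrib
        rw [if_neg]
        intro hcond
        exact hct ⟨hcond.1, hcond.2.1, hcond.2.2.1⟩
      rw [h1]
      simp [P20, P02, P00, Finset.mem_filter, hct]
  unfold mScore
  rw [Finset.sum_congr rfl (fun e _ => hpt e)]
  rw [Finset.sum_add_distrib, Finset.sum_add_distrib, Finset.sum_ite_mem,
    Finset.sum_ite_mem, Finset.sum_ite_mem, Finset.univ_inter, Finset.univ_inter,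
    Finset.univ_inter, Finset.sum_const, Finset.sum_const, Finset.sum_const,
    smul_eq_mul, smul_eq_mul, smul_eq_mul, card_P02]
  have harith : (P20 F).card * (c + 1) + (P20 F).card * (c + 1) + (P00 F).card * 2
      = 2 * ((c + 1) * (P20 F).card + (P00 F).card) := by ring
  rw [harith, Nat.mul_div_cancel_left _ (by norm_num)]

lemma ccc_eq (hF : IsMEmbedding F) : mCContribs F = (P20 F).card := by
  unfold mCContribs
  have himg : {e : Sym2 MIdx | ∃ p q : MIdx, e = Sym2.mk p q ∧
      d3 (F p) (F q) = 1 ∧ q ≠ mNext p ∧ p ≠ mNext q ∧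
      ((mLabel p = 2 ∧ mLabel q = 0) ∨ (mLabel p = 0 ∧ mLabel q = 2))} =
      Sym2.mk.uncurry '' ↑(P20 F) := by
    ext e
    simp only [Set.mem_setOf_eq, Set.mem_image, Finset.mem_coe]
    constructor
    · rintro ⟨p, q, rfl, h1, h2, h3, (⟨hp, hq⟩ | ⟨hp, hq⟩)⟩
      · refine ⟨(p, q), ?_, rfl⟩
        simp only [P20, Finset.mem_filter, Finset.mem_univ, true_and]
        exact ⟨⟨h1, h2, h3⟩, hp, hq⟩
      · refine ⟨(q, p), ?_, ?_⟩
        · simp only [P20, Finset.mem_filter, Finset.mem_univ, true_and]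
          exact ⟨⟨by rw [d3_comm]; exact h1, h3, h2⟩, hq, hp⟩
        · exact Sym2.eq_swap
    · rintro ⟨⟨p, q⟩, hmem, rfl⟩
      simp only [P20, Finset.mem_filter, Finset.mem_univ, true_and] at hmem
      exact ⟨p, q, rfl, hmem.1.1, hmem.1.2.1, hmem.1.2.2, Or.inl ⟨hmem.2.1, hmem.2.2⟩⟩
  rw [himg, Set.ncard_image_of_injOn, Set.ncard_coe_finset]
  rintro ⟨p, q⟩ hpq ⟨p', q'⟩ hpq' heq
  rcases Sym2.mk_eq_mk_iff.mp heq with h | h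
  · exact h
  · exfalso
    simp only [Finset.mem_coe, P20, Finset.mem_filter, Finset.mem_univ, true_and] at hpq hpq'
    have hp : p = q' := (Prod.ext_iff.mp h).1
    have h2 : mLabel q' = 2 := hp ▸ hpq.2.1
    exact absurd (h2.symm.trans hpq'.2.2) (by decide)

lemma main_count (hF : IsMEmbedding F) :
    2 * (P20 F).card + (P00 F).card ≤ 48 := by
  classical
  set T : ZMod 2 → Finset (MIdx × MIdx) :=
    fun ε => (P20 F).filter (fun e => gp F e.2 = ε) with hT
  set U : ZMod 2 → Finset (MIdx × MIdx) :=
    fun ε => (P00 F).filter (fun e => gp F e.2 = ε) with hU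
  set Z : ZMod 2 → Finset MIdx :=
    fun ε => Finset.univ.filter (fun p => mLabel p = 0 ∧ gp F p = ε) with hZ
  have hz10 : ∀ z : ZMod 2, z = 1 ↔ ¬z = 0 := by decide
  have split : ∀ s : Finset (MIdx × MIdx),
      (s.filter (fun e => gp F e.2 = 0)).card + (s.filter (fun e => gp F e.2 = 1)).card
        = s.card := by
    intro s
    rw [show s.filter (fun e => gp F e.2 = 1) = s.filter (fun e => ¬gp F e.2 = 0) from
      Finset.filter_congr (fun e _ => hz10 _)]
    exact Finset.card_filter_add_card_filter_not _
  have hsplit20 : (T 0).card + (T 1).card = (P20 F).card := split (P20 F)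
  have hsplit00 : (U 0).card + (U 1).card = (P00 F).card := split (P00 F)
  -- U 0 and U 1 have the same cardinality via swapping
  have hU01 : (U 0).card = (U 1).card := by
    apply Finset.card_bij (fun e _ => (e.2, e.1))
    · rintro ⟨p, q⟩ h
      simp only [hU, P00, Finset.mem_filter, Finset.mem_univ, true_and] at h ⊢
      obtain ⟨⟨hct, hp, hq⟩, hg⟩ := h
      refine ⟨⟨Ct_symm hct, hq, hp⟩, ?_⟩
      have hne : gp F p ≠ gp F q := par_ne hct.1
      rw [hg] at hne
      exact (hz10 _).mpr hne
    · rintro ⟨p, q⟩ h ⟨p', q'⟩ h' heq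
      simp only [Prod.mk.injEq] at heq ⊢
      exact ⟨heq.2, heq.1⟩
    · rintro ⟨p, q⟩ h
      refine ⟨(q, p), ?_, rfl⟩
      simp only [hU, P00, Finset.mem_filter, Finset.mem_univ, true_and] at h ⊢
      obtain ⟨⟨hct, hp, hq⟩, hg⟩ := h
      refine ⟨⟨Ct_symm hct, hq, hp⟩, ?_⟩
      have hne : gp F p ≠ gp F q := par_ne hct.1
      rw [hg] at hne
      by_contra hne0
      exact hne ((hz10 _).mpr hne0)
  have hdeg2 : ∀ b : MIdx, (Finset.univ.filter (fun p => Ct F p b)).card ≤ 4 := deg_snd hF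
  have hdeg1 : ∀ a : MIdx, (Finset.univ.filter (fun q => Ct F a q)).card ≤ 4 := deg_fst hF
  -- pairs counted at their zero endpoint
  have hTU : ∀ ε, (T ε).card + (U ε).card ≤ 4 * (Z ε).card := by
    intro ε
    have hdisj : Disjoint (T ε) (U ε) := by
      rw [Finset.disjoint_left]
      intro e h1 h2
      simp only [hT, hU, P20, P00, Finset.mem_filter, Finset.mem_univ, true_and] at h1 h2
      exact absurd (h1.1.2.1.symm.trans h2.1.2.1) (by decide)
    rw [← Finset.card_union_of_disjoint hdisj]
    have hsmem : ∀ e ∈ T ε ∪ U ε, Ct F e.1 e.2 ∧ mLabel e.2 = 0 ∧ gp F e.2 = ε := by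
      intro e he
      rw [Finset.mem_union] at he
      rcases he with he | he <;>
        simp only [hT, hU, P20, P00, Finset.mem_filter, Finset.mem_univ, true_and] at he <;>
        exact ⟨he.1.1, he.1.2.2, he.2⟩
    have hfib : ∀ b ∈ (T ε ∪ U ε).image Prod.snd,
        ((T ε ∪ U ε).filter (fun e => e.2 = b)).card ≤ 4 := by
      intro b _
      refine le_trans (Finset.card_le_card_of_injOn Prod.fst ?_ ?_) (hdeg2 b)
      · intro e he
        rw [Finset.mem_coe, Finset.mem_filter] at he
        simp only [Finset.mem_coe, Finset.mem_filter, Finset.mem_univ, true_and]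
        rw [← he.2]
        exact (hsmem e he.1).1
      · intro a ha b' hb' hfst
        simp only [Finset.coe_filter, Set.mem_setOf_eq] at ha hb'
        exact Prod.ext hfst (ha.2.trans hb'.2.symm)
    have himg : (T ε ∪ U ε).image Prod.snd ⊆ Z ε := by
      intro b hb
      rw [Finset.mem_image] at hb
      obtain ⟨e, he, rfl⟩ := hb
      simp only [hZ, Finset.mem_filter, Finset.mem_univ, true_and]
      exact ⟨(hsmem e he).2.1, (hsmem e he).2.2⟩
    calc (T ε ∪ U ε).card ≤ 4 * ((T ε ∪ U ε).image Prod.snd).card :=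
          Finset.card_le_mul_card_image _ 4 hfib
      _ ≤ 4 * (Z ε).card := Nat.mul_le_mul_left _ (Finset.card_le_card himg)
  -- 2-0 pairs counted at their "2" endpoint: at most 8 in each class
  have hW : ∀ ε, (T ε).card ≤ 8 := by
    intro ε
    set W := Finset.univ.filter (fun p => mLabel p = 2 ∧ gp F p = ε + 1) with hWd
    have hTmem : ∀ e ∈ T ε, Ct F e.1 e.2 ∧ mLabel e.1 = 2 ∧ gp F e.1 = ε + 1 := by
      intro e he
      simp only [hT, P20, Finset.mem_filter, Finset.mem_univ, true_and] at he
      obtain ⟨⟨hct, h2, h0⟩, hg⟩ := he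
      refine ⟨hct, h2, ?_⟩
      have hne : gp F e.1 ≠ gp F e.2 := par_ne hct.1
      rw [hg] at hne
      exact z2_resolve hne
    have hfibW : ∀ a ∈ (T ε).image Prod.fst,
        ((T ε).filter (fun e => e.1 = a)).card ≤ 4 := by
      intro a _
      refine le_trans (Finset.card_le_card_of_injOn Prod.snd ?_ ?_) (hdeg1 a)
      · intro e he
        rw [Finset.mem_coe, Finset.mem_filter] at he
        simp only [Finset.mem_coe, Finset.mem_filter, Finset.mem_univ, true_and]
        rw [← he.2]
        exact (hTmem e he.1).1
      · intro a1 ha1 a2 ha2 hsnd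
        simp only [Finset.coe_filter, Set.mem_setOf_eq] at ha1 ha2
        exact Prod.ext (ha1.2.trans ha2.2.symm) hsnd
    have himgW : (T ε).image Prod.fst ⊆ W := by
      intro a ha
      rw [Finset.mem_image] at ha
      obtain ⟨e, he, rfl⟩ := ha
      simp only [hWd, Finset.mem_filter, Finset.mem_univ, true_and]
      exact ⟨(hTmem e he).2.1, (hTmem e he).2.2⟩
    have hz2add : ∀ z : ZMod 2, z + 1 + 1 ≠ z + 1 := by decide
    have hcW : W.card ≤ 2 := by
      by_cases hb : gp F (.inr 0) = ε + 1
      · have hsub : W ⊆ {Sum.inr 0, Sum.inr 2} := by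
          intro p hp
          simp only [hWd, Finset.mem_filter, Finset.mem_univ, true_and] at hp
          obtain ⟨h2, hg⟩ := hp
          rcases label_two h2 with rfl | rfl | rfl
          · simp
          · exfalso
            rw [gp_inr_one hF, hb] at hg
            exact hz2add ε hg
          · simp
        exact le_trans (Finset.card_le_card hsub)
          (le_trans (Finset.card_insert_le _ _) (by simp))
      · have hsub : W ⊆ {Sum.inr 1} := by
          intro p hp
          simp only [hWd, Finset.mem_filter, Finset.mem_univ, true_and] at hp
          obtain ⟨h2, hg⟩ := hp
          rcases label_two h2 with rfl | rfl | rfl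
          · exact absurd hg hb
          · simp
          · rw [gp_inr_two hF] at hg
            exact absurd hg hb
        exact le_trans (Finset.card_le_card hsub) (by simp)
    calc (T ε).card ≤ 4 * ((T ε).image Prod.fst).card :=
          Finset.card_le_mul_card_image _ 4 hfibW
      _ ≤ 4 * W.card := Nat.mul_le_mul_left _ (Finset.card_le_card himgW)
      _ ≤ 8 := by omega
  -- one of the two parity classes contains at most one 8-chain's zeros
  have hZb : (Z 0).card ≤ 4 ∨ (Z 1).card ≤ 4 := by
    set a : Fin 3 → ZMod 2 := fun k => gp F (.inl (k, 0)) with ha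
    have hzc : ∀ ε, (Z ε).card ≤ 4 * (Finset.univ.filter (fun k => a k = ε)).card := by
      intro ε
      have hsub : Z ε ⊆ (Finset.univ.filter (fun k => a k = ε)).biUnion
          (fun k => (Finset.univ.filter (fun i : ZMod 8 => i.val % 2 = 0)).image
            (fun i => (Sum.inl (k, i) : MIdx))) := by
        intro p hp
        simp only [hZ, Finset.mem_filter, Finset.mem_univ, true_and] at hp
        obtain ⟨h0, hg⟩ := hp
        obtain ⟨k, i, rfl, heven⟩ := label_zero h0
        have hval0 : ((i.val : ℕ) : ZMod 2) = 0 :=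
          (ZMod.natCast_eq_zero_iff i.val 2).mpr (Nat.dvd_of_mod_eq_zero heven)
        have hgp : gp F (Sum.inl (k, i)) = a k := by
          rw [gp_inl hF k i, hval0, add_zero, ha]
        rw [Finset.mem_biUnion]
        refine ⟨k, ?_, ?_⟩
        · simp only [Finset.mem_filter, Finset.mem_univ, true_and]
          rw [← hgp]; exact hg
        · simp only [Finset.mem_image, Finset.mem_filter, Finset.mem_univ, true_and]
          exact ⟨i, heven, rfl⟩
      have hbu := Finset.card_biUnion_le (s := Finset.univ.filter (fun k => a k = ε))
        (t := fun k => (Finset.univ.filter (fun i : ZMod 8 => i.val % 2 = 0)).image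
          (fun i => (Sum.inl (k, i) : MIdx)))
      have hsum : ∑ k ∈ Finset.univ.filter (fun k => a k = ε),
          ((Finset.univ.filter (fun i : ZMod 8 => i.val % 2 = 0)).image
            (fun i => (Sum.inl (k, i) : MIdx))).card
          ≤ (Finset.univ.filter (fun k => a k = ε)).card * 4 := by
        have := Finset.sum_le_card_nsmul (Finset.univ.filter (fun k => a k = ε))
          (fun k => ((Finset.univ.filter (fun i : ZMod 8 => i.val % 2 = 0)).image
            (fun i => (Sum.inl (k, i) : MIdx))).card) 4
          (fun k _ => le_trans Finset.card_image_le (by decide))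
        simpa [smul_eq_mul] using this
      have hc1 := Finset.card_le_card hsub
      omega
    have pig : (Finset.univ.filter (fun k => a k = 0)).card ≤ 1 ∨
        (Finset.univ.filter (fun k => a k = 1)).card ≤ 1 := by
      have hdec : ∀ f : Fin 3 → ZMod 2,
          (Finset.univ.filter (fun k => f k = 0)).card ≤ 1 ∨
          (Finset.univ.filter (fun k => f k = 1)).card ≤ 1 := by decide
      exact hdec a
    rcases pig with h | h
    · left; have := hzc 0; omega
    · right; have := hzc 1; omega
  have hTU0 := hTU 0
  have hTU1 := hTU 1
  have hW0 := hW 0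
  have hW1 := hW 1
  rcases hZb with h | h <;> omega

end HP17

open HP17 in
/-- If `c ≥ 10` and an embedding `ψ` of `M = {(01)^4,(01)^4,(01)^4, 2^3 1^9}` has at most
`12 − x` many `c`-contributions, where `1 ≤ x ≤ 4`, then its score is at most
`(12−x)(c+1) + (4−x)·6 + x·8`, which is strictly less than the intended score
`12(c+1) + 16`. -/
theorem stmt17 (c x : ℕ) (hc : 10 ≤ c) (hx1 : 1 ≤ x) (hx4 : x ≤ 4)
    (F : MIdx → ℤ × ℤ × ℤ) (hF : IsMEmbedding F) (hcc : mCContribs F ≤ 12 - x) :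
    mScore c F ≤ (12 - x) * (c + 1) + (4 - x) * 6 + x * 8 ∧
      (12 - x) * (c + 1) + (4 - x) * 6 + x * 8 < 12 * (c + 1) + 16 := by
  have hc0 : c ≠ 0 := by omega
  have hscore := score_eq c hc0 hF
  have hcnt := main_count hF
  have hm : (P20 F).card ≤ 12 - x := by rw [← ccc_eq hF]; exact hcc
  constructor
  · rw [hscore]
    have hsub : c - 1 + 2 = c + 1 := by omega
    have e1 : (P20 F).card * (c + 1) = (P20 F).card * (c - 1) + 2 * (P20 F).card := by
      rw [← hsub]; ring
    have e2 : (12 - x) * (c + 1) = (12 - x) * (c - 1) + 2 * (12 - x) := by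
      rw [← hsub]; ring
    have h1 : (P20 F).card * (c - 1) ≤ (12 - x) * (c - 1) :=
      Nat.mul_le_mul_right _ hm
    have h48 : (4 - x) * 6 + x * 8 + 2 * (12 - x) = 48 := by omega
    have e3 : (c + 1) * (P20 F).card = (P20 F).card * (c + 1) := Nat.mul_comm _ _
    linarith
  · have h24 : (4 - x) * 6 + x * 8 = 24 + 2 * x := by omega
    have hsplit : (12 - x) * (c + 1) + x * (c + 1) = 12 * (c + 1) := by
      rw [← Nat.add_mul]; congr 1; omega
    have hx11 : x * 11 ≤ x * (c + 1) := Nat.mul_le_mul_left _ (by omega)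
    have hx11' : 11 * 1 ≤ 11 * x := Nat.mul_le_mul_left _ hx1
    linarith
end
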